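/- arXiv:2305.12939 — 13 statements merged into one kernel-verified Lean document; each statement's English description precedes it below -/
import Mathlib

section
/- Let f: ℝᵈ → ℝ be convex and differentiable with minimizer x* and minimum value f*. Then minimizing the upper bound on ‖x - η g‖², i.e., choosing η = (f(x) - f*)/‖∇f(x)‖² (the Polyak step size) for gradient descent x⁺ = x - η∇f(x) with ∇f(x) ≠ 0 yields ‖x⁺ - x*‖² ≤ ‖x - x*‖² - (f(x) - f*)²/‖∇f(x)‖². -/
/-!
Convexity gives `f x - f* ≤ ⟪∇f x, x - x*⟫`. Expanding the square,
`‖x⁺ - x*‖² = ‖x - x*‖² - (f x - f*)² / ‖∇f x‖² - 2η (⟪∇f x, x - x*⟫ - (f x - f*))`,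
and the last term is nonnegative because `η ≥ 0`.
-/

open scoped RealInnerProductSpace

section InnerProductSpace

variable {E : Type*} [NormedAddCommGroup E] [InnerProductSpace ℝ E]

theorem sub_le_inner_of_le_add_inner {f : E → ℝ} {g x y : E} (h : f x + ⟪g, y - x⟫ ≤ f y) :
    f x - f y ≤ ⟪g, x - y⟫ := by
  rw [← neg_sub, inner_neg_right] at h
  linarith

theorem norm_sub_div_norm_sq_smul_sq_eq (v g : E) (a : ℝ) (hg : g ≠ 0) :
    ‖v - (a / ‖g‖ ^ 2) • g‖ ^ 2
      = ‖v‖ ^ 2 - a ^ 2 / ‖g‖ ^ 2 - 2 * (a / ‖g‖ ^ 2) * (⟪g, v⟫ - a) := by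
  have hg2 : ‖g‖ ^ 2 ≠ 0 := by positivity
  rw [norm_sub_sq_real, real_inner_smul_right, norm_smul, mul_pow, Real.norm_eq_abs, sq_abs,
    real_inner_comm]
  field_simp
  ring

theorem norm_sub_div_norm_sq_smul_sq_le {v g : E} {a : ℝ} (ha : 0 ≤ a) (hav : a ≤ ⟪g, v⟫) :
    ‖v - (a / ‖g‖ ^ 2) • g‖ ^ 2 ≤ ‖v‖ ^ 2 - a ^ 2 / ‖g‖ ^ 2 := by
  rcases eq_or_ne g 0 with rfl | hg
  · simp -- `a / 0 = 0`, so both sides are `‖v‖ ^ 2`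
  rw [norm_sub_div_norm_sq_smul_sq_eq v g a hg]
  have : 0 ≤ 2 * (a / ‖g‖ ^ 2) * (⟪g, v⟫ - a) := by
    have := sub_nonneg.2 hav
    positivity
  linarith

end InnerProductSpace

theorem polyak_step_decrease_general
    {E : Type*} [NormedAddCommGroup E] [InnerProductSpace ℝ E]
    (f : E → ℝ) (g : E → E)
    (hconv : ∀ y z : E, f y + ⟪g y, z - y⟫ ≤ f z)
    (xstar : E) (fstar : ℝ) (hfstar : fstar = f xstar)
    (hmin : ∀ y : E, f xstar ≤ f y)
    (x : E)
    (η : ℝ) (hη : η = (f x - fstar) / ‖g x‖ ^ 2)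
    (xplus : E) (hxplus : xplus = x - η • g x) :
    ‖xplus - xstar‖ ^ 2 ≤ ‖x - xstar‖ ^ 2 - (f x - fstar) ^ 2 / ‖g x‖ ^ 2 := by
  subst hfstar hη hxplus
  rw [sub_right_comm]
  exact norm_sub_div_norm_sq_smul_sq_le (sub_nonneg.2 (hmin x))
    (sub_le_inner_of_le_add_inner (hconv x xstar))

/-- Polyak step size for gradient descent on a convex differentiable function:
one step decreases the squared distance to the minimizer by `(f x - f*)² / ‖∇f x‖²`. -/
theorem polyak_step_decrease
    {E : Type*} [NormedAddCommGroup E] [InnerProductSpace ℝ E]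
    (f : E → ℝ) (g : E → E)
    (hconv : ∀ y z : E, f y + ⟪g y, z - y⟫ ≤ f z)
    (xstar : E) (fstar : ℝ) (hfstar : fstar = f xstar)
    (hmin : ∀ y : E, f xstar ≤ f y)
    (x : E) (hg : g x ≠ 0)
    (η : ℝ) (hη : η = (f x - fstar) / ‖g x‖ ^ 2)
    (xplus : E) (hxplus : xplus = x - η • g x) :
    ‖xplus - xstar‖ ^ 2 ≤ ‖x - xstar‖ ^ 2 - (f x - fstar) ^ 2 / ‖g x‖ ^ 2 :=
  polyak_step_decrease_general f g hconv xstar fstar hfstar hmin x η hη xplus hxplus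
end

section
/- Let f: ℝᵈ → ℝ be convex and differentiable. Consider the MAG iteration d_k = ∇f(x_k) + β d_{k-1} with d_0 = 0, x_{k+1} = x_k - η_k d_k, where β ∈ (0,1). If η_i ≤ (f(x_i) - f*)/‖d_i‖² for all i ≤ k-1 (with d_i ≠ 0), then ⟨d_{k-1}, x_k - x*⟩ ≥ 0, where x* is a global minimizer of f. -/
open scoped RealInnerProductSpace

/-- MAG with step sizes bounded by the Polyak-type value: the averaged direction
`d (k-1)` forms an acute angle with `x k - x*`. -/
theorem mag_direction_acute
    {E : Type*} [NormedAddCommGroup E] [InnerProductSpace ℝ E]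
    (f : E → ℝ) (g : E → E)
    (hconv : ∀ y z : E, f y + ⟪g y, z - y⟫ ≤ f z)
    (xstar : E) (fstar : ℝ) (hfstar : fstar = f xstar)
    (hmin : ∀ y : E, f xstar ≤ f y)
    (β : ℝ) (hβ : β ∈ Set.Ioo (0 : ℝ) 1)
    (x d : ℕ → E) (η : ℕ → ℝ)
    (hd0 : d 0 = 0)
    (hd : ∀ k, 1 ≤ k → d k = g (x k) + β • d (k - 1))
    (hx : ∀ k, 1 ≤ k → x (k + 1) = x k - η k • d k) :
    ∀ k, 1 ≤ k →
      (∀ i, 1 ≤ i → i ≤ k - 1 → d i ≠ 0 ∧ η i ≤ (f (x i) - fstar) / ‖d i‖ ^ 2) →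
      0 ≤ ⟪d (k - 1), x k - xstar⟫ := by
  -- reformulate with k = n + 1
  suffices H : ∀ n : ℕ,
      (∀ i, 1 ≤ i → i ≤ n → d i ≠ 0 ∧ η i ≤ (f (x i) - fstar) / ‖d i‖ ^ 2) →
      0 ≤ ⟪d n, x (n + 1) - xstar⟫ by
    intro k hk h
    obtain ⟨n, rfl⟩ := Nat.exists_eq_add_of_le hk
    have := H n (by simpa using h)
    simpa [Nat.add_comm 1 n] using this
  intro n
  induction n with
  | zero =>
    intro _
    simp [hd0]
  | succ n ih =>
    intro h
    have ih' : 0 ≤ ⟪d n, x (n + 1) - xstar⟫ :=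
      ih (fun i hi1 hin => h i hi1 (hin.trans (Nat.le_succ n)))
    obtain ⟨hdn, hη⟩ := h (n + 1) (Nat.le_add_left 1 n) le_rfl
    have hxk : x (n + 2) = x (n + 1) - η (n + 1) • d (n + 1) :=
      hx (n + 1) (Nat.le_add_left 1 n)
    have hdk : d (n + 1) = g (x (n + 1)) + β • d n := by
      simpa using hd (n + 1) (Nat.le_add_left 1 n)
    have hF : 0 ≤ f (x (n + 1)) - fstar := by
      rw [hfstar]; linarith [hmin (x (n + 1))]
    have hnorm : (0 : ℝ) < ‖d (n + 1)‖ ^ 2 := pow_pos (norm_pos_iff.mpr hdn) 2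
    have hηb : η (n + 1) * ‖d (n + 1)‖ ^ 2 ≤ f (x (n + 1)) - fstar := by
      rw [div_eq_mul_inv] at hη
      calc η (n + 1) * ‖d (n + 1)‖ ^ 2
          ≤ ((f (x (n + 1)) - fstar) * (‖d (n + 1)‖ ^ 2)⁻¹) * ‖d (n + 1)‖ ^ 2 :=
            mul_le_mul_of_nonneg_right hη hnorm.le
        _ = f (x (n + 1)) - fstar := by field_simp
    have hgrad : f (x (n + 1)) - fstar ≤ ⟪g (x (n + 1)), x (n + 1) - xstar⟫ := by
      have := hconv (x (n + 1)) xstar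
      rw [hfstar]
      have h2 : ⟪g (x (n + 1)), xstar - x (n + 1)⟫ = -⟪g (x (n + 1)), x (n + 1) - xstar⟫ := by
        rw [← inner_neg_right]; congr 1; abel
      linarith [this, h2.symm ▸ this]
    have hβ0 : (0 : ℝ) < β := hβ.1
    have expand : ⟪d (n + 1), x (n + 2) - xstar⟫
        = ⟪g (x (n + 1)), x (n + 1) - xstar⟫ + β * ⟪d n, x (n + 1) - xstar⟫
          - η (n + 1) * ‖d (n + 1)‖ ^ 2 := by
      rw [hxk]
      have : x (n + 1) - η (n + 1) • d (n + 1) - xstar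
          = (x (n + 1) - xstar) - η (n + 1) • d (n + 1) := by abel
      rw [this, inner_sub_right, real_inner_smul_right,
        real_inner_self_eq_norm_sq]
      nth_rewrite 1 [hdk]
      rw [inner_add_left, real_inner_smul_left]
    rw [expand]
    nlinarith [mul_nonneg hβ0.le ih']
end

section
/- Let f: ℝᵈ → ℝ be convex and differentiable, and let {x_k} be generated by MAG with the adaptive step size η_k = (f(x_k) - f*)/‖d_k‖² (assuming d_k ≠ 0). Then for every k, ‖x_{k+1} - x*‖² ≤ ‖x_k - x*‖² - η_k (f(x_k) - f*). -/
open scoped RealInnerProductSpace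

/-- ALR-MAG on a convex function: the squared distance to the minimizer decreases
by at least `η k * (f (x k) - f*)` at every step. -/
theorem alr_mag_distance_decrease
    {E : Type*} [NormedAddCommGroup E] [InnerProductSpace ℝ E]
    (f : E → ℝ) (g : E → E)
    (hconv : ∀ y z : E, f y + ⟪g y, z - y⟫ ≤ f z)
    (xstar : E) (fstar : ℝ) (hfstar : fstar = f xstar)
    (hmin : ∀ y : E, f xstar ≤ f y)
    (β : ℝ) (hβ : β ∈ Set.Ioo (0 : ℝ) 1)
    (x d : ℕ → E) (η : ℕ → ℝ)
    (hd0 : d 0 = 0)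
    (hd : ∀ k, 1 ≤ k → d k = g (x k) + β • d (k - 1))
    (hdne : ∀ k, 1 ≤ k → d k ≠ 0)
    (hη : ∀ k, 1 ≤ k → η k = (f (x k) - fstar) / ‖d k‖ ^ 2)
    (hx : ∀ k, 1 ≤ k → x (k + 1) = x k - η k • d k) :
    ∀ k, 1 ≤ k →
      ‖x (k + 1) - xstar‖ ^ 2 ≤ ‖x k - xstar‖ ^ 2 - η k * (f (x k) - fstar) := by
  have hge : ∀ y, (0:ℝ) ≤ f y - fstar := fun y => by
    have := hmin y; rw [hfstar]; linarith
  have hgrad : ∀ y, f y - fstar ≤ ⟪g y, y - xstar⟫ := fun y => by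
    have h := hconv y xstar
    have h2 : ⟪g y, xstar - y⟫ = -⟪g y, y - xstar⟫ := by
      rw [← inner_neg_right, neg_sub]
    rw [hfstar]; rw [h2] at h; linarith
  have hηd : ∀ k, 1 ≤ k → η k * ‖d k‖ ^ 2 = f (x k) - fstar := fun k hk => by
    have hne : ‖d k‖ ≠ 0 := norm_ne_zero_iff.mpr (hdne k hk)
    rw [hη k hk]
    field_simp
  have hηnn : ∀ k, 1 ≤ k → 0 ≤ η k := fun k hk => by
    rw [hη k hk]
    exact div_nonneg (hge _) (by positivity)
  have key : ∀ k, 1 ≤ k → f (x k) - fstar ≤ ⟪d k, x k - xstar⟫ := by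
    intro k hk
    induction k, hk using Nat.le_induction with
    | base =>
      have hd1 := hd 1 le_rfl
      simp only [Nat.sub_self, hd0, smul_zero, add_zero] at hd1
      rw [hd1]
      exact hgrad (x 1)
    | succ k hk ih =>
      have hdk := hd (k + 1) (by omega)
      simp only [Nat.add_sub_cancel] at hdk
      have hxk := hx k hk
      have hsplit : ⟪d (k+1), x (k+1) - xstar⟫
          = ⟪g (x (k+1)), x (k+1) - xstar⟫ + β * ⟪d k, x (k+1) - xstar⟫ := by
        rw [hdk, inner_add_left, real_inner_smul_left]
      have hrw : x (k+1) - xstar = (x k - xstar) - η k • d k := by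
        rw [hxk]; abel
      have hin : ⟪d k, x (k+1) - xstar⟫
          = ⟪d k, x k - xstar⟫ - η k * ‖d k‖ ^ 2 := by
        rw [hrw, inner_sub_right, real_inner_smul_right,
          real_inner_self_eq_norm_sq]
      have hnn : 0 ≤ ⟪d k, x (k+1) - xstar⟫ := by
        rw [hin, hηd k hk]; linarith [ih]
      have hβ0 : 0 ≤ β := le_of_lt hβ.1
      have := hgrad (x (k+1))
      nlinarith [mul_nonneg hβ0 hnn]
  intro k hk
  have hkey := key k hk
  have hηdk := hηd k hk
  have hηnnk := hηnn k hk
  have hgek := hge (x k)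
  rw [hx k hk]
  have hrw : x k - η k • d k - xstar = (x k - xstar) - η k • d k := by abel
  have expand : ‖x k - η k • d k - xstar‖ ^ 2
      = ‖x k - xstar‖ ^ 2 - 2 * (η k * ⟪d k, x k - xstar⟫)
        + η k ^ 2 * ‖d k‖ ^ 2 := by
    rw [hrw, @norm_sub_sq_real, real_inner_smul_right, norm_smul,
      Real.norm_eq_abs, abs_of_nonneg hηnnk, mul_pow,
      real_inner_comm]
  rw [expand]
  nlinarith [mul_le_mul_of_nonneg_left hkey hηnnk]
end

section
/- Let f: ℝᵈ → ℝ be convex, differentiable, and L-smooth, and let {x_k} be generated by MAG with step size η_k = (f(x_k) - f*)/‖d_k‖². Then for every k ≥ 2, ⟨d_{k-1}, x_k - x*⟩ ≥ (1/(2L)) ∑_{i=1}^{k-1} β^{k-1-i} ‖∇f(x_i)‖². -/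
open Finset
open scoped RealInnerProductSpace

/-!
Two facts about a convex `L`-smooth function with minimizer `x⋆` give the bound. First,
`f y - f⋆ + ‖∇f y‖² / (2L) ≤ ⟪∇f y, y - x⋆⟫`: compare the convexity bound at `y` with the
smoothness bound at `x⋆` (where the gradient vanishes) at the point `x⋆ + ∇f y / L`. Second, the
Polyak step size makes `⟪d_k, x_{k+1} - x⋆⟫ = ⟪d_k, x_k - x⋆⟫ - (f x_k - f⋆)` exactly. Expanding
`d_k = ∇f x_k + β d_{k-1}` and combining the two, `a_k := ⟪d_k, x_{k+1} - x⋆⟫` satisfies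
`a_k ≥ ‖∇f x_k‖² / (2L) + β a_{k-1}` with `a_0 = 0`, and unrolling this recursion gives the
discounted sum.
-/

theorem mul_sum_Icc_pow_le_of_le_succ {β c : ℝ} {a u : ℕ → ℝ} (hβ : 0 ≤ β) (h0 : 0 ≤ a 0)
    (hstep : ∀ n, c * u (n + 1) + β * a n ≤ a (n + 1)) (n : ℕ) :
    c * ∑ i ∈ Icc 1 n, β ^ (n - i) * u i ≤ a n := by
  induction n with
  | zero => simpa using h0
  | succ n ih =>
    have hsum : ∑ i ∈ Icc 1 (n + 1), β ^ (n + 1 - i) * u i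
        = u (n + 1) + β * ∑ i ∈ Icc 1 n, β ^ (n - i) * u i := by
      rw [sum_Icc_succ_top (by omega), Nat.sub_self, pow_zero, one_mul, add_comm, mul_sum]
      congr 1
      refine sum_congr rfl fun i hi => ?_
      rw [show n + 1 - i = n - i + 1 by grind, pow_succ]
      ring
    calc c * ∑ i ∈ Icc 1 (n + 1), β ^ (n + 1 - i) * u i
        = c * u (n + 1) + β * (c * ∑ i ∈ Icc 1 n, β ^ (n - i) * u i) := by rw [hsum]; ring
      _ ≤ c * u (n + 1) + β * a n := by gcongr
      _ ≤ a (n + 1) := hstep n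

theorem inner_sub_div_norm_sq_smul {E : Type*} [NormedAddCommGroup E] [InnerProductSpace ℝ E]
    {d : E} (hd : d ≠ 0) (x z : E) (r : ℝ) :
    ⟪d, x - (r / ‖d‖ ^ 2) • d - z⟫ = ⟪d, x - z⟫ - r := by
  have hnorm : ‖d‖ ^ 2 ≠ 0 := by positivity
  rw [sub_right_comm, inner_sub_right, real_inner_smul_right, real_inner_self_eq_norm_sq,
    div_mul_cancel₀ r hnorm]

section Smooth

variable {E : Type*} [NormedAddCommGroup E] [InnerProductSpace ℝ E]
  {f : E → ℝ} {g : E → E} {L : ℝ}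

theorem le_add_inner_add_norm_sq_of_smooth
    (hsmooth : ∀ y z : E, f z ≤ f y + ⟪g y, z - y⟫ + L / 2 * ‖z - y‖ ^ 2)
    (hL : 0 < L) (y v : E) :
    f (y + L⁻¹ • v) ≤ f y + L⁻¹ * ⟪g y, v⟫ + 1 / (2 * L) * ‖v‖ ^ 2 := by
  have h := hsmooth y (y + L⁻¹ • v)
  rw [add_sub_cancel_left, real_inner_smul_right, norm_smul, Real.norm_of_nonneg (by positivity),
    mul_pow] at h
  convert h using 2
  field_simp

theorem grad_eq_zero_of_smooth_of_isMin
    (hsmooth : ∀ y z : E, f z ≤ f y + ⟪g y, z - y⟫ + L / 2 * ‖z - y‖ ^ 2)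
    (hL : 0 < L) {xstar : E} (hmin : ∀ y : E, f xstar ≤ f y) : g xstar = 0 := by
  have hdescent := le_add_inner_add_norm_sq_of_smooth hsmooth hL xstar (-g xstar)
  rw [inner_neg_right, real_inner_self_eq_norm_sq, norm_neg] at hdescent
  have hsq : ‖g xstar‖ ^ 2 ≤ 0 := by
    have hhalf : L⁻¹ * ‖g xstar‖ ^ 2 = 2 * (1 / (2 * L) * ‖g xstar‖ ^ 2) := by field_simp
    have hmin' := hmin (xstar + L⁻¹ • -g xstar)
    nlinarith [show 0 < 1 / (2 * L) by positivity]
  simpa using hsq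

theorem sub_add_inv_two_mul_norm_sq_le_inner
    (hconv : ∀ y z : E, f y + ⟪g y, z - y⟫ ≤ f z)
    (hsmooth : ∀ y z : E, f z ≤ f y + ⟪g y, z - y⟫ + L / 2 * ‖z - y‖ ^ 2)
    (hL : 0 < L) {xstar : E} (hmin : ∀ y : E, f xstar ≤ f y) (y : E) :
    f y - f xstar + 1 / (2 * L) * ‖g y‖ ^ 2 ≤ ⟪g y, y - xstar⟫ := by
  have hupper := le_add_inner_add_norm_sq_of_smooth hsmooth hL xstar (g y)
  rw [grad_eq_zero_of_smooth_of_isMin hsmooth hL hmin, inner_zero_left, mul_zero,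
    add_zero] at hupper
  have hlower := hconv y (xstar + L⁻¹ • g y)
  rw [show xstar + L⁻¹ • g y - y = L⁻¹ • g y - (y - xstar) by abel, inner_sub_right,
    real_inner_smul_right, real_inner_self_eq_norm_sq] at hlower
  have hhalf : L⁻¹ * ‖g y‖ ^ 2 = 2 * (1 / (2 * L) * ‖g y‖ ^ 2) := by field_simp
  linarith

end Smooth

/-- ALR-MAG on a convex `L`-smooth function: lower bound on the inner product of
the averaged direction with the direction to the minimizer. -/
theorem alr_mag_smooth_inner_lower_bound
    {E : Type*} [NormedAddCommGroup E] [InnerProductSpace ℝ E]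
    (f : E → ℝ) (g : E → E) (L : ℝ) (hL : 0 < L)
    (hconv : ∀ y z : E, f y + ⟪g y, z - y⟫ ≤ f z)
    (hsmooth : ∀ y z : E, f z ≤ f y + ⟪g y, z - y⟫ + L / 2 * ‖z - y‖ ^ 2)
    (xstar : E) (fstar : ℝ) (hfstar : fstar = f xstar)
    (hmin : ∀ y : E, f xstar ≤ f y)
    (β : ℝ) (hβ : β ∈ Set.Ioo (0 : ℝ) 1)
    (x d : ℕ → E) (η : ℕ → ℝ)
    (hd0 : d 0 = 0)
    (hd : ∀ k, 1 ≤ k → d k = g (x k) + β • d (k - 1))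
    (hdne : ∀ k, 1 ≤ k → d k ≠ 0)
    (hη : ∀ k, 1 ≤ k → η k = (f (x k) - fstar) / ‖d k‖ ^ 2)
    (hx : ∀ k, 1 ≤ k → x (k + 1) = x k - η k • d k) :
    ∀ k, 2 ≤ k →
      (1 / (2 * L)) * ∑ i ∈ Icc 1 (k - 1), β ^ (k - 1 - i) * ‖g (x i)‖ ^ 2
        ≤ ⟪d (k - 1), x k - xstar⟫ := by
  subst hfstar
  have hstep : ∀ n, 1 / (2 * L) * ‖g (x (n + 1))‖ ^ 2 + β * ⟪d n, x (n + 1) - xstar⟫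
      ≤ ⟪d (n + 1), x (n + 1 + 1) - xstar⟫ := by
    intro n
    have hpos : 1 ≤ n + 1 := Nat.le_add_left 1 n
    have hkey := sub_add_inv_two_mul_norm_sq_le_inner hconv hsmooth hL hmin (x (n + 1))
    rw [hx _ hpos, hη _ hpos, inner_sub_div_norm_sq_smul (hdne _ hpos), hd _ hpos,
      Nat.add_sub_cancel, inner_add_left, real_inner_smul_left]
    linarith
  intro k hk
  obtain ⟨n, rfl⟩ : ∃ n, k = n + 1 := ⟨k - 1, by omega⟩
  have hstart : 0 ≤ ⟪d 0, x (0 + 1) - xstar⟫ := by rw [hd0, inner_zero_left]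
  rw [Nat.add_sub_cancel]
  exact mul_sum_Icc_pow_le_of_le_succ (a := fun n => ⟪d n, x (n + 1) - xstar⟫)
    hβ.1.le hstart hstep n
end

section
/- Let f be convex, differentiable and L-smooth, and let {x_k} be generated by MAG with step size η_k = (f(x_k) - f*)/‖d_k‖². Then ‖x_{k+1} - x*‖² ≤ ‖x_k - x*‖² - (η_k + (1-β)/L)(f(x_k) - f*). -/
/-!
Co-coercivity of the gradient of a convex `L`-smooth function, evaluated against the minimizer
(where the gradient vanishes), gives `2L (f y - f*) + ‖g y‖² ≤ 2L ⟪g y, y - x*⟫`. The momentum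
direction inherits the weaker bound `2L (f x_k - f*) + (1 - β) ‖d_k‖² ≤ 2L ⟪d_k, x_k - x*⟫` by
induction on `k`: the Polyak-type step size makes `η_k ‖d_k‖² = f x_k - f*`, which cancels the
function values of the previous iterate, and what remains is `β ‖g x_{k+1} - (1 - β) d_k‖² ≥ 0`.
Expanding `‖x_k - η_k d_k - x*‖²` and inserting this bound gives the decrease.
-/

open scoped RealInnerProductSpace

section

variable {E : Type*} [NormedAddCommGroup E] [InnerProductSpace ℝ E] {f : E → ℝ} {g : E → E}
  {L : ℝ}

theorem smooth_apply_sub_smul_le (hL : L ≠ 0)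
    (hsmooth : ∀ y z : E, f z ≤ f y + ⟪g y, z - y⟫ + L / 2 * ‖z - y‖ ^ 2) (z v : E) :
    f (z - L⁻¹ • v) ≤ f z - L⁻¹ * ⟪g z, v⟫ + ‖v‖ ^ 2 / (2 * L) := by
  have h := hsmooth z (z - L⁻¹ • v)
  rw [sub_sub_cancel_left, inner_neg_right, real_inner_smul_right, norm_neg, norm_smul,
    mul_pow, Real.norm_eq_abs, sq_abs] at h
  convert h using 2
  · ring
  · field_simp

theorem eq_zero_of_smooth_of_forall_le (hL : 0 < L)
    (hsmooth : ∀ y z : E, f z ≤ f y + ⟪g y, z - y⟫ + L / 2 * ‖z - y‖ ^ 2) {xstar : E}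
    (hmin : ∀ y : E, f xstar ≤ f y) : g xstar = 0 := by
  have h := (hmin _).trans (smooth_apply_sub_smul_le hL.ne' hsmooth xstar (g xstar))
  rw [real_inner_self_eq_norm_sq] at h
  have hsq : ‖g xstar‖ ^ 2 / (2 * L) ≤ 0 := by
    have : L⁻¹ * ‖g xstar‖ ^ 2 = 2 * (‖g xstar‖ ^ 2 / (2 * L)) := by field_simp
    linarith
  have : ‖g xstar‖ ^ 2 / (2 * L) = 0 := le_antisymm hsq (by positivity)
  simpa [hL.ne'] using this

theorem cocoercive_of_convex_of_smooth (hL : L ≠ 0)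
    (hconv : ∀ y z : E, f y + ⟪g y, z - y⟫ ≤ f z)
    (hsmooth : ∀ y z : E, f z ≤ f y + ⟪g y, z - y⟫ + L / 2 * ‖z - y‖ ^ 2) (y z : E) :
    f y + ⟪g y, z - y⟫ + ‖g z - g y‖ ^ 2 / (2 * L) ≤ f z := by
  set v := g z - g y
  have hlow := hconv y (z - L⁻¹ • v)
  have hup := smooth_apply_sub_smul_le hL hsmooth z v
  rw [sub_right_comm, inner_sub_right, real_inner_smul_right] at hlow
  have hv : ⟪g z, v⟫ - ⟪g y, v⟫ = ‖v‖ ^ 2 := by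
    rw [← inner_sub_left, real_inner_self_eq_norm_sq]
  have : L⁻¹ * ⟪g z, v⟫ - L⁻¹ * ⟪g y, v⟫ = 2 * (‖v‖ ^ 2 / (2 * L)) := by
    rw [← mul_sub, hv]; field_simp
  linarith

theorem two_mul_sub_add_sq_norm_le_inner (hL : 0 < L)
    (hconv : ∀ y z : E, f y + ⟪g y, z - y⟫ ≤ f z)
    (hsmooth : ∀ y z : E, f z ≤ f y + ⟪g y, z - y⟫ + L / 2 * ‖z - y‖ ^ 2) {xstar : E}
    (hmin : ∀ y : E, f xstar ≤ f y) (y : E) :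
    2 * L * (f y - f xstar) + ‖g y‖ ^ 2 ≤ 2 * L * ⟪g y, y - xstar⟫ := by
  have h := cocoercive_of_convex_of_smooth hL.ne' hconv hsmooth y xstar
  rw [eq_zero_of_smooth_of_forall_le hL hsmooth hmin, zero_sub, norm_neg, ← neg_sub y,
    inner_neg_right] at h
  have : 2 * L * (‖g y‖ ^ 2 / (2 * L)) = ‖g y‖ ^ 2 := by field_simp
  nlinarith

theorem sq_norm_add_smul_le {β : ℝ} (hβ : 0 ≤ β) (u v : E) :
    (1 - β) * ‖u + β • v‖ ^ 2 ≤ ‖u‖ ^ 2 + β * (1 - β) * ‖v‖ ^ 2 := by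
  have hsq : ‖u‖ ^ 2 + β * (1 - β) * ‖v‖ ^ 2 - (1 - β) * ‖u + β • v‖ ^ 2
      = β * ‖u - (1 - β) • v‖ ^ 2 := by
    rw [norm_add_sq_real, norm_sub_sq_real, real_inner_smul_right, real_inner_smul_right,
      norm_smul, norm_smul, mul_pow, mul_pow, Real.norm_eq_abs, Real.norm_eq_abs, sq_abs, sq_abs]
    ring
  nlinarith [mul_nonneg hβ (sq_nonneg ‖u - (1 - β) • v‖)]

theorem mag_potential_step {β η : ℝ} {x d xstar : E} (hβ : 0 ≤ β)
    (hgrad : 2 * L * (f (x - η • d) - f xstar) + ‖g (x - η • d)‖ ^ 2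
      ≤ 2 * L * ⟪g (x - η • d), x - η • d - xstar⟫)
    (hηd : η * ‖d‖ ^ 2 = f x - f xstar)
    (h : 2 * L * (f x - f xstar) + (1 - β) * ‖d‖ ^ 2 ≤ 2 * L * ⟪d, x - xstar⟫) :
    2 * L * (f (x - η • d) - f xstar) + (1 - β) * ‖g (x - η • d) + β • d‖ ^ 2
      ≤ 2 * L * ⟪g (x - η • d) + β • d, x - η • d - xstar⟫ := by
  have hinner : ⟪g (x - η • d) + β • d, x - η • d - xstar⟫
      = ⟪g (x - η • d), x - η • d - xstar⟫ + β * (⟪d, x - xstar⟫ - η * ‖d‖ ^ 2) := by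
    rw [inner_add_left, real_inner_smul_left, sub_right_comm x, inner_sub_right (𝕜 := ℝ) d,
      real_inner_smul_right, real_inner_self_eq_norm_sq]
  rw [hinner, hηd]
  nlinarith [sq_norm_add_smul_le hβ (g (x - η • d)) d, mul_le_mul_of_nonneg_left h hβ]

theorem sq_norm_sub_smul_sub_le {β η c : ℝ} {x d xstar : E} (hL : 0 < L) (hη : 0 ≤ η)
    (hηd : η * ‖d‖ ^ 2 = c) (h : 2 * L * c + (1 - β) * ‖d‖ ^ 2 ≤ 2 * L * ⟪d, x - xstar⟫) :
    ‖x - η • d - xstar‖ ^ 2 ≤ ‖x - xstar‖ ^ 2 - (η + (1 - β) / L) * c := by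
  have hexpand : ‖x - η • d - xstar‖ ^ 2
      = ‖x - xstar‖ ^ 2 - 2 * η * ⟪d, x - xstar⟫ + η * c := by
    rw [sub_right_comm, norm_sub_sq_real, real_inner_smul_right, norm_smul, mul_pow,
      Real.norm_eq_abs, sq_abs, real_inner_comm, ← hηd]
    ring
  have hscaled : η * (2 * L * c + (1 - β) * ‖d‖ ^ 2) ≤ η * (2 * L * ⟪d, x - xstar⟫) :=
    mul_le_mul_of_nonneg_left h hη
  have hcL : (1 - β) / L * c * L = (1 - β) * (η * ‖d‖ ^ 2) := by
    rw [hηd]; field_simp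
  suffices (2 * η * c + (1 - β) / L * c) * L ≤ 2 * η * ⟪d, x - xstar⟫ * L by
    rw [hexpand]; nlinarith [le_of_mul_le_mul_right this hL]
  nlinarith [hscaled, hcL]

end

/-- ALR-MAG on a convex `L`-smooth function: the squared distance to the minimizer
decreases by at least `(η k + (1-β)/L) * (f (x k) - f*)`. -/
theorem alr_mag_smooth_distance_decrease
    {E : Type*} [NormedAddCommGroup E] [InnerProductSpace ℝ E]
    (f : E → ℝ) (g : E → E) (L : ℝ) (hL : 0 < L)
    (hconv : ∀ y z : E, f y + ⟪g y, z - y⟫ ≤ f z)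
    (hsmooth : ∀ y z : E, f z ≤ f y + ⟪g y, z - y⟫ + L / 2 * ‖z - y‖ ^ 2)
    (xstar : E) (fstar : ℝ) (hfstar : fstar = f xstar)
    (hmin : ∀ y : E, f xstar ≤ f y)
    (β : ℝ) (hβ : β ∈ Set.Ioo (0 : ℝ) 1)
    (x d : ℕ → E) (η : ℕ → ℝ)
    (hd0 : d 0 = 0)
    (hd : ∀ k, 1 ≤ k → d k = g (x k) + β • d (k - 1))
    (hdne : ∀ k, 1 ≤ k → d k ≠ 0)
    (hη : ∀ k, 1 ≤ k → η k = (f (x k) - fstar) / ‖d k‖ ^ 2)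
    (hx : ∀ k, 1 ≤ k → x (k + 1) = x k - η k • d k) :
    ∀ k, 1 ≤ k →
      ‖x (k + 1) - xstar‖ ^ 2 ≤
        ‖x k - xstar‖ ^ 2 - (η k + (1 - β) / L) * (f (x k) - fstar) := by
  subst hfstar
  have hgrad := two_mul_sub_add_sq_norm_le_inner hL hconv hsmooth hmin
  have hηd : ∀ k, 1 ≤ k → η k * ‖d k‖ ^ 2 = f (x k) - f xstar := fun k hk => by
    rw [hη k hk, div_mul_cancel₀ _ (pow_ne_zero 2 (norm_ne_zero_iff.mpr (hdne k hk)))]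
  have hpot : ∀ k, 1 ≤ k →
      2 * L * (f (x k) - f xstar) + (1 - β) * ‖d k‖ ^ 2 ≤ 2 * L * ⟪d k, x k - xstar⟫ := by
    intro k hk
    induction k, hk using Nat.le_induction with
    | base =>
      rw [hd 1 le_rfl, hd0, smul_zero, add_zero]
      linarith [hgrad (x 1), mul_nonneg hβ.1.le (sq_nonneg ‖g (x 1)‖)]
    | succ k hk ih =>
      rw [hd (k + 1) (by omega), Nat.add_sub_cancel, hx k hk]
      exact mag_potential_step hβ.1.le (hgrad _) (hηd k hk) ih
  intro k hk
  have hη0 : 0 ≤ η k := by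
    rw [hη k hk]
    exact div_nonneg (sub_nonneg.mpr (hmin _)) (sq_nonneg _)
  rw [hx k hk]
  exact sq_norm_sub_smul_sub_le hL hη0 (hηd k hk) (hpot k hk)
end

section
/- Suppose f: ℝᵈ → ℝ is convex, differentiable, L-smooth, and semi-strongly convex with constant μ̂ > 0, i.e., (μ̂/2)‖x - x*‖² ≤ f(x) - f* for all x. Then the iterates of ALR-MAG with η_k = (f(x_k) - f*)/‖d_k‖² satisfy ‖x_k - x*‖² ≤ (1 - ρ)^{k-1} ‖x_1 - x*‖² with ρ = (1-β)μ̂/(2L). -/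
open scoped RealInnerProductSpace

set_option maxHeartbeats 1000000 in
/-- Linear convergence of ALR-MAG for convex, `L`-smooth, semi-strongly convex
functions: `‖x k - x*‖² ≤ (1-ρ)^(k-1) ‖x 1 - x*‖²` with `ρ = (1-β) μ̂ / (2L)`. -/
theorem alr_mag_linear_convergence
    {E : Type*} [NormedAddCommGroup E] [InnerProductSpace ℝ E]
    (f : E → ℝ) (g : E → E) (L μ : ℝ) (hL : 0 < L) (hμ : 0 < μ) (hμL : μ ≤ L)
    (hconv : ∀ y z : E, f y + ⟪g y, z - y⟫ ≤ f z)
    (hsmooth : ∀ y z : E, f z ≤ f y + ⟪g y, z - y⟫ + L / 2 * ‖z - y‖ ^ 2)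
    (xstar : E) (fstar : ℝ) (hfstar : fstar = f xstar)
    (hmin : ∀ y : E, f xstar ≤ f y)
    (hsemistrong : ∀ y : E, μ / 2 * ‖y - xstar‖ ^ 2 ≤ f y - fstar)
    (β : ℝ) (hβ : β ∈ Set.Ioo (0 : ℝ) 1)
    (x d : ℕ → E) (η : ℕ → ℝ)
    (hd0 : d 0 = 0)
    (hd : ∀ k, 1 ≤ k → d k = g (x k) + β • d (k - 1))
    (hdne : ∀ k, 1 ≤ k → d k ≠ 0)
    (hη : ∀ k, 1 ≤ k → η k = (f (x k) - fstar) / ‖d k‖ ^ 2)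
    (hx : ∀ k, 1 ≤ k → x (k + 1) = x k - η k • d k) :
    ∀ k, 1 ≤ k →
      ‖x k - xstar‖ ^ 2 ≤
        (1 - (1 - β) * μ / (2 * L)) ^ (k - 1) * ‖x 1 - xstar‖ ^ 2 := by
  obtain ⟨hβ0, hβ1⟩ := hβ
  have hL' : (L : ℝ) ≠ 0 := ne_of_gt hL
  have h2L : (0:ℝ) < 2 * L := by linarith
  set ρ := (1 - β) * μ / (2 * L) with hρ
  -- interpolation inequality for convex L-smooth functions
  have interp : ∀ y z : E, f y + ⟪g y, z - y⟫ + 1/(2*L) * ‖g z - g y‖^2 ≤ f z := by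
    intro y z
    set w := z - L⁻¹ • (g z - g y) with hw
    have h1 := hconv y w
    have h2 := hsmooth z w
    have e0 : w - z = -(L⁻¹ • (g z - g y)) := by rw [hw]; abel
    have e1 : ⟪g y, w - y⟫ = ⟪g y, z - y⟫ - L⁻¹ * ⟪g y, g z - g y⟫ := by
      rw [hw, sub_right_comm, inner_sub_right, real_inner_smul_right]
    have e2 : ⟪g z, w - z⟫ = -(L⁻¹ * ⟪g z, g z - g y⟫) := by
      rw [e0, inner_neg_right, real_inner_smul_right]
    have e3 : ‖w - z‖^2 = L⁻¹^2 * ‖g z - g y‖^2 := by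
      rw [e0, norm_neg, norm_smul, mul_pow, Real.norm_eq_abs, sq_abs]
    have e4 : ⟪g z, g z - g y⟫ - ⟪g y, g z - g y⟫ = ‖g z - g y‖^2 := by
      rw [← inner_sub_left, real_inner_self_eq_norm_sq]
    rw [e1] at h1
    rw [e2, e3] at h2
    have hinv : L * L⁻¹ = 1 := mul_inv_cancel₀ hL'
    have hgoal : L⁻¹ * ‖g z - g y‖^2 - L/2 * (L⁻¹^2 * ‖g z - g y‖^2)
        = 1/(2*L) * ‖g z - g y‖^2 := by
      field_simp
      ring
    nlinarith [h1, h2, e4]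
  -- the gradient vanishes at the minimizer
  have hgstar : g xstar = 0 := by
    have h2 := hsmooth xstar (xstar - L⁻¹ • g xstar)
    have hm := hmin (xstar - L⁻¹ • g xstar)
    have e0 : xstar - L⁻¹ • g xstar - xstar = -(L⁻¹ • g xstar) := by abel
    rw [e0] at h2
    rw [inner_neg_right, real_inner_smul_right, real_inner_self_eq_norm_sq,
      norm_neg, norm_smul, mul_pow, Real.norm_eq_abs, sq_abs] at h2
    have hns : ‖g xstar‖^2 ≤ 0 := by
      have h6 : L⁻¹ * ‖g xstar‖^2 ≤ L/2 * (L⁻¹^2 * ‖g xstar‖^2) := by linarith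
      have e5 : L * (L/2 * (L⁻¹^2 * ‖g xstar‖^2)) = 1/2 * ‖g xstar‖^2 := by
        field_simp
      have e6 : L * (L⁻¹ * ‖g xstar‖^2) = ‖g xstar‖^2 := by field_simp
      linarith [mul_le_mul_of_nonneg_left h6 hL.le]
    have : ‖g xstar‖ = 0 := by nlinarith [norm_nonneg (g xstar), sq_nonneg ‖g xstar‖]
    exact norm_eq_zero.mp this
  have key1 : ∀ y : E, f y - fstar + 1/(2*L) * ‖g y‖^2 ≤ ⟪g y, y - xstar⟫ := by
    intro y
    have h := interp y xstar
    rw [hgstar, zero_sub, norm_neg] at h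
    have e : ⟪g y, xstar - y⟫ = -⟪g y, y - xstar⟫ := by
      rw [← inner_neg_right, neg_sub]
    rw [e] at h
    rw [hfstar]
    linarith
  have hΔ : ∀ y : E, 0 ≤ f y - fstar := by
    intro y; rw [hfstar]; linarith [hmin y]
  have hηd : ∀ k, 1 ≤ k → η k * ‖d k‖^2 = f (x k) - fstar := by
    intro k hk
    have hne : ‖d k‖^2 ≠ 0 := pow_ne_zero _ (norm_ne_zero_iff.mpr (hdne k hk))
    rw [hη k hk, div_mul_cancel₀ _ hne]
  have hηpos : ∀ k, 1 ≤ k → 0 ≤ η k := by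
    intro k hk
    rw [hη k hk]
    exact div_nonneg (hΔ _) (sq_nonneg _)
  -- main invariant
  have inv : ∀ k, 1 ≤ k →
      f (x k) - fstar + (1-β)/(2*L) * ‖d k‖^2 ≤ ⟪d k, x k - xstar⟫ := by
    intro k hk
    induction k, hk using Nat.le_induction with
    | base =>
      have hd1 : d 1 = g (x 1) := by rw [hd 1 le_rfl]; simp [hd0]
      rw [hd1]
      have h := key1 (x 1)
      have hmono : (1-β)/(2*L) * ‖g (x 1)‖^2 ≤ 1/(2*L) * ‖g (x 1)‖^2 := by
        gcongr
        linarith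
      linarith
    | succ k hk ih =>
      have hdk1 : d (k+1) = g (x (k+1)) + β • d k := by
        rw [hd (k+1) (by omega)]
        norm_num
      have hxk1 : x (k+1) = x k - η k • d k := hx k hk
      have A1 : ⟪d k, x (k+1) - xstar⟫ = ⟪d k, x k - xstar⟫ - (f (x k) - fstar) := by
        rw [hxk1, sub_right_comm, inner_sub_right, real_inner_smul_right,
          real_inner_self_eq_norm_sq]
        rw [hηd k hk]
      have A2 : ⟪d (k+1), x (k+1) - xstar⟫
          = ⟪g (x (k+1)), x (k+1) - xstar⟫ + β * ⟪d k, x (k+1) - xstar⟫ := by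
        rw [hdk1, inner_add_left, real_inner_smul_left]
      have N : ‖d (k+1)‖^2
          = ‖g (x (k+1))‖^2 + 2*(β*⟪g (x (k+1)), d k⟫) + β^2*‖d k‖^2 := by
        rw [hdk1, norm_add_sq_real, real_inner_smul_right, norm_smul, mul_pow, Real.norm_eq_abs, sq_abs]
      have E1 : (0:ℝ) ≤ ‖g (x (k+1)) - (1-β) • d k‖^2 := sq_nonneg _
      have E2 : ‖g (x (k+1)) - (1-β) • d k‖^2
          = ‖g (x (k+1))‖^2 - 2*((1-β)*⟪g (x (k+1)), d k⟫) + (1-β)^2*‖d k‖^2 := by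
        rw [norm_sub_sq_real, real_inner_smul_right, norm_smul, mul_pow, Real.norm_eq_abs, sq_abs]
      have E1' : (0:ℝ) ≤ ‖g (x (k+1))‖^2 - 2*((1-β)*⟪g (x (k+1)), d k⟫)
          + (1-β)^2*‖d k‖^2 := E2 ▸ E1
      have key3 : (1-β) * ‖d (k+1)‖^2 ≤ ‖g (x (k+1))‖^2 + β*(1-β)*‖d k‖^2 := by
        nlinarith [mul_nonneg hβ0.le E1', N]
      have hstep : (1-β)/(2*L) * ‖d (k+1)‖^2
          ≤ 1/(2*L) * ‖g (x (k+1))‖^2 + β * ((1-β)/(2*L) * ‖d k‖^2) := by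
        have h1 : (1-β)/(2*L) * ‖d (k+1)‖^2 = ((1-β) * ‖d (k+1)‖^2) / (2*L) := by ring
        have h2 : (1:ℝ)/(2*L) * ‖g (x (k+1))‖^2 + β * ((1-β)/(2*L) * ‖d k‖^2)
            = (‖g (x (k+1))‖^2 + β*(1-β)*‖d k‖^2) / (2*L) := by ring
        rw [h1, h2]
        gcongr
      have hih : β * ((1-β)/(2*L) * ‖d k‖^2) ≤ β * ⟪d k, x (k+1) - xstar⟫ := by
        rw [A1]
        exact mul_le_mul_of_nonneg_left (by linarith) hβ0.le
      have hk1 := key1 (x (k+1))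
      linarith [A2, hk1, hstep, hih]
  -- per-step contraction
  have step : ∀ k, 1 ≤ k → ‖x (k+1) - xstar‖^2 ≤ (1 - ρ) * ‖x k - xstar‖^2 := by
    intro k hk
    have hxk1 := hx k hk
    have expand : ‖x (k+1) - xstar‖^2
        = ‖x k - xstar‖^2 - 2*(η k * ⟪d k, x k - xstar⟫) + η k^2 * ‖d k‖^2 := by
      rw [hxk1, sub_right_comm, norm_sub_sq_real, real_inner_smul_right, norm_smul,
        mul_pow, Real.norm_eq_abs, sq_abs, real_inner_comm]
    have h1 : η k^2 * ‖d k‖^2 = η k * (f (x k) - fstar) := by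
      rw [sq, mul_assoc, hηd k hk]
    have h2 := mul_le_mul_of_nonneg_left (inv k hk) (hηpos k hk)
    have h3 : η k * ((1-β)/(2*L) * ‖d k‖^2) = (1-β)/(2*L) * (f (x k) - fstar) := by
      rw [mul_left_comm, hηd k hk]
    rw [mul_add] at h2
    rw [h3] at h2
    have h4 : ρ * ‖x k - xstar‖^2 ≤ 2 * ((1-β)/(2*L)) * (f (x k) - fstar) := by
      have hs := hsemistrong (x k)
      have hc : (0:ℝ) ≤ (1-β)/L := div_nonneg (by linarith) hL.le
      have := mul_le_mul_of_nonneg_left hs hc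
      calc ρ * ‖x k - xstar‖^2 = (1-β)/L * (μ/2 * ‖x k - xstar‖^2) := by
            rw [hρ]; field_simp
        _ ≤ (1-β)/L * (f (x k) - fstar) := this
        _ = 2 * ((1-β)/(2*L)) * (f (x k) - fstar) := by field_simp
    have h5 : 0 ≤ η k * (f (x k) - fstar) := mul_nonneg (hηpos k hk) (hΔ (x k))
    linarith [expand, h1, h2, h4, h5]
  -- final induction
  intro k hk
  induction k, hk using Nat.le_induction with
  | base => norm_num
  | succ k hk ih =>
    have hρ1 : 0 ≤ 1 - ρ := by
      have hnum : (1-β) * μ ≤ 2 * L := by nlinarith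
      have : ρ ≤ 1 := by
        rw [hρ, div_le_one h2L]
        exact hnum
      linarith
    calc ‖x (k+1) - xstar‖^2 ≤ (1 - ρ) * ‖x k - xstar‖^2 := step k hk
      _ ≤ (1 - ρ) * ((1 - ρ)^(k-1) * ‖x 1 - xstar‖^2) :=
          mul_le_mul_of_nonneg_left ih hρ1
      _ = (1 - ρ)^(k+1-1) * ‖x 1 - xstar‖^2 := by
          rw [← mul_assoc, ← pow_succ']
          congr 2
          omega
end

section
/- Let f be convex and differentiable with ‖∇f(x)‖ ≤ G for all x, and let {x_k} be generated by ALR-MAG with η_k = (f(x_k) - f*)/‖d_k‖². Then for the averaged iterate x̂_k = (1/k)∑_{i=1}^k x_i, f(x̂_k) - f* ≤ G‖x_1 - x*‖ / ((1-β)√k). -/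
open Finset
open scoped RealInnerProductSpace

/-- `O(1/√k)` convergence of ALR-MAG for convex functions with bounded gradients,
for the averaged iterate `x̂ k = (1/k) ∑_{i=1}^k x i`. -/
theorem alr_mag_convex_rate
    {E : Type*} [NormedAddCommGroup E] [InnerProductSpace ℝ E]
    (f : E → ℝ) (g : E → E) (G : ℝ) (hG : 0 < G)
    (hconv : ∀ y z : E, f y + ⟪g y, z - y⟫ ≤ f z)
    (hGbound : ∀ y : E, ‖g y‖ ≤ G)
    (xstar : E) (fstar : ℝ) (hfstar : fstar = f xstar)
    (hmin : ∀ y : E, f xstar ≤ f y)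
    (β : ℝ) (hβ : β ∈ Set.Ioo (0 : ℝ) 1)
    (x d : ℕ → E) (η : ℕ → ℝ)
    (hd0 : d 0 = 0)
    (hd : ∀ k, 1 ≤ k → d k = g (x k) + β • d (k - 1))
    (hdne : ∀ k, 1 ≤ k → d k ≠ 0)
    (hη : ∀ k, 1 ≤ k → η k = (f (x k) - fstar) / ‖d k‖ ^ 2)
    (hx : ∀ k, 1 ≤ k → x (k + 1) = x k - η k • d k) :
    ∀ k : ℕ, 1 ≤ k →
      f (((k : ℝ)⁻¹) • (∑ i ∈ Icc (1:ℕ) k, x i)) - fstar ≤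
        G * ‖x 1 - xstar‖ / ((1 - β) * Real.sqrt k) := by
  obtain ⟨hβ0, hβ1⟩ := hβ
  have h1β : (0:ℝ) < 1 - β := by linarith
  have hΔ0 : ∀ i, 0 ≤ f (x i) - fstar := fun i => by
    rw [hfstar]; linarith [hmin (x i)]
  have hgrad : ∀ y : E, f y - fstar ≤ ⟪g y, y - xstar⟫ := by
    intro y
    have h := hconv y xstar
    have h2 : ⟪g y, xstar - y⟫ = -⟪g y, y - xstar⟫ := by
      rw [← inner_neg_right, neg_sub]
    rw [hfstar]; linarith [h, h2.le, h2.ge]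
  -- bound on direction norms
  have hdbound : ∀ k, ‖d k‖ ≤ G / (1 - β) := by
    intro k
    induction k with
    | zero => rw [hd0, norm_zero]; positivity
    | succ n ih =>
      rw [hd (n+1) (by omega)]
      simp only [Nat.add_sub_cancel]
      calc ‖g (x (n+1)) + β • d n‖ ≤ ‖g (x (n+1))‖ + ‖β • d n‖ := norm_add_le _ _
        _ ≤ G + β * (G / (1 - β)) := by
            rw [norm_smul, Real.norm_of_nonneg hβ0.le]
            gcongr
            · exact hGbound _
        _ = G / (1 - β) := by field_simp; ring
  have hηd : ∀ n, 1 ≤ n → η n * ‖d n‖ ^ 2 = f (x n) - fstar := by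
    intro n hn
    have hne : ‖d n‖ ≠ 0 := norm_ne_zero_iff.mpr (hdne n hn)
    rw [hη n hn]; field_simp
  -- lower bound on ⟪d k, x k - x*⟫
  have hs : ∀ k, 1 ≤ k → f (x k) - fstar ≤ ⟪d k, x k - xstar⟫ := by
    intro k hk
    induction k, hk using Nat.le_induction with
    | base =>
      have : d 1 = g (x 1) := by
        rw [hd 1 le_rfl]; simp [hd0]
      rw [this]; exact hgrad (x 1)
    | succ n hn ih =>
      have hkey : ⟪d (n+1), x (n+1) - xstar⟫ =
          ⟪g (x (n+1)), x (n+1) - xstar⟫ +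
            β * (⟪d n, x n - xstar⟫ - (f (x n) - fstar)) := by
        rw [hd (n+1) (by omega)]
        simp only [Nat.add_sub_cancel]
        rw [inner_add_left, real_inner_smul_left]
        congr 1
        rw [hx n hn]
        rw [show x n - η n • d n - xstar = (x n - xstar) - η n • d n by abel]
        rw [inner_sub_right, real_inner_smul_right, real_inner_self_eq_norm_sq,
          hηd n hn]
      have h1 : f (x (n+1)) - fstar ≤ ⟪g (x (n+1)), x (n+1) - xstar⟫ := hgrad _
      have h2 : 0 ≤ β * (⟪d n, x n - xstar⟫ - (f (x n) - fstar)) :=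
        mul_nonneg hβ0.le (by linarith)
      linarith [hkey.le, hkey.ge]
  -- one-step descent
  have hdesc : ∀ n, 1 ≤ n →
      ‖x (n+1) - xstar‖ ^ 2 ≤ ‖x n - xstar‖ ^ 2 -
        (f (x n) - fstar) ^ 2 / ‖d n‖ ^ 2 := by
    intro n hn
    have hne : ‖d n‖ ≠ 0 := norm_ne_zero_iff.mpr (hdne n hn)
    have hd2 : (0:ℝ) < ‖d n‖ ^ 2 := by positivity
    have hexp : ‖x (n+1) - xstar‖ ^ 2 = ‖x n - xstar‖ ^ 2 -
        2 * (η n * ⟪d n, x n - xstar⟫) + η n ^ 2 * ‖d n‖ ^ 2 := by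
      rw [hx n hn]
      rw [show x n - η n • d n - xstar = (x n - xstar) - η n • d n by abel]
      rw [norm_sub_sq_real, real_inner_smul_right, norm_smul, mul_pow,
        Real.norm_eq_abs, sq_abs, real_inner_comm]
    have hηval : η n = (f (x n) - fstar) / ‖d n‖ ^ 2 := hη n hn
    have hηnn : 0 ≤ η n := by
      rw [hηval]; exact div_nonneg (hΔ0 n) hd2.le
    have hsn := hs n hn
    have h3 : η n * (f (x n) - fstar) ≤ η n * ⟪d n, x n - xstar⟫ :=
      mul_le_mul_of_nonneg_left hsn hηnn
    have h4 : η n * (f (x n) - fstar) = (f (x n) - fstar) ^ 2 / ‖d n‖ ^ 2 := by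
      rw [hηval]; field_simp
    have h5 : η n ^ 2 * ‖d n‖ ^ 2 = (f (x n) - fstar) ^ 2 / ‖d n‖ ^ 2 := by
      rw [hηval]; field_simp
    rw [hexp, h5]
    linarith [h3, h4.le, h4.ge]
  -- telescoping
  have htel : ∀ k, 1 ≤ k →
      ∑ i ∈ Icc (1:ℕ) k, (f (x i) - fstar) ^ 2 / ‖d i‖ ^ 2 ≤
        ‖x 1 - xstar‖ ^ 2 - ‖x (k+1) - xstar‖ ^ 2 := by
    intro k hk
    induction k, hk using Nat.le_induction with
    | base =>
      have := hdesc 1 le_rfl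
      simp only [Finset.Icc_self, Finset.sum_singleton]
      linarith
    | succ n hn ih =>
      rw [Finset.sum_Icc_succ_top (by omega : (1:ℕ) ≤ n+1)]
      have := hdesc (n+1) (by omega)
      linarith
  intro k hk
  have hk0 : (0:ℝ) < (k:ℝ) := by exact_mod_cast hk
  set R := ‖x 1 - xstar‖ with hRdef
  have hR0 : 0 ≤ R := norm_nonneg _
  -- sum of squared gaps bound
  have hsumsq : ∑ i ∈ Icc (1:ℕ) k, (f (x i) - fstar) ^ 2 ≤
      (G / (1 - β)) ^ 2 * R ^ 2 := by
    have h1 : ∑ i ∈ Icc (1:ℕ) k, (f (x i) - fstar) ^ 2 ≤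
        (G / (1 - β)) ^ 2 *
          ∑ i ∈ Icc (1:ℕ) k, (f (x i) - fstar) ^ 2 / ‖d i‖ ^ 2 := by
      rw [Finset.mul_sum]
      refine Finset.sum_le_sum fun i hi => ?_
      have hi1 : 1 ≤ i := (Finset.mem_Icc.mp hi).1
      have hne : ‖d i‖ ≠ 0 := norm_ne_zero_iff.mpr (hdne i hi1)
      have hd2 : (0:ℝ) < ‖d i‖ ^ 2 := by positivity
      have hdb : ‖d i‖ ^ 2 ≤ (G / (1 - β)) ^ 2 := by
        have := hdbound i
        have := norm_nonneg (d i)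
        nlinarith
      have hfrac : 0 ≤ (f (x i) - fstar) ^ 2 / ‖d i‖ ^ 2 := by positivity
      have he : ‖d i‖ ^ 2 * ((f (x i) - fstar) ^ 2 / ‖d i‖ ^ 2) =
          (f (x i) - fstar) ^ 2 := by field_simp
      linarith [mul_le_mul_of_nonneg_right hdb hfrac, he]
    have h2 := htel k hk
    have h3 : ‖x (k+1) - xstar‖ ^ 2 ≥ 0 := by positivity
    calc ∑ i ∈ Icc (1:ℕ) k, (f (x i) - fstar) ^ 2 ≤
        (G / (1 - β)) ^ 2 * ∑ i ∈ Icc (1:ℕ) k, (f (x i) - fstar) ^ 2 / ‖d i‖ ^ 2 := h1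
      _ ≤ (G / (1 - β)) ^ 2 * R ^ 2 := by
          have hnn : (0:ℝ) ≤ (G / (1 - β)) ^ 2 := by positivity
          have : ∑ i ∈ Icc (1:ℕ) k, (f (x i) - fstar) ^ 2 / ‖d i‖ ^ 2 ≤ R ^ 2 := by
            rw [hRdef]; linarith
          exact mul_le_mul_of_nonneg_left this hnn
  -- Cauchy–Schwarz
  have hcard : (Icc (1:ℕ) k).card = k := by rw [Nat.card_Icc]; omega
  set A := ∑ i ∈ Icc (1:ℕ) k, (f (x i) - fstar) with hAdef
  have hA0 : 0 ≤ A := Finset.sum_nonneg fun i _ => hΔ0 i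
  have hCS : A ^ 2 ≤ (k:ℝ) * ((G / (1 - β)) ^ 2 * R ^ 2) := by
    have := sq_sum_le_card_mul_sum_sq (s := Icc (1:ℕ) k)
      (f := fun i => f (x i) - fstar)
    rw [hcard] at this
    calc A ^ 2 ≤ (k:ℝ) * ∑ i ∈ Icc (1:ℕ) k, (f (x i) - fstar) ^ 2 := by
          exact_mod_cast this
      _ ≤ (k:ℝ) * ((G / (1 - β)) ^ 2 * R ^ 2) :=
          mul_le_mul_of_nonneg_left hsumsq hk0.le
  have hAle : A ≤ Real.sqrt k * (G / (1 - β) * R) := by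
    have hC0 : 0 ≤ G / (1 - β) * R := by positivity
    have : A ^ 2 ≤ (Real.sqrt k * (G / (1 - β) * R)) ^ 2 := by
      rw [mul_pow, Real.sq_sqrt hk0.le]
      calc A ^ 2 ≤ (k:ℝ) * ((G / (1 - β)) ^ 2 * R ^ 2) := hCS
        _ = (k:ℝ) * (G / (1 - β) * R) ^ 2 := by ring
    have hnn : 0 ≤ Real.sqrt k * (G / (1 - β) * R) := by positivity
    nlinarith
  -- Jensen step
  set y := ((k:ℝ)⁻¹) • (∑ i ∈ Icc (1:ℕ) k, x i) with hydef
  have hjensen : (k:ℝ) * (f y - fstar) ≤ A := by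
    have h1 : ∑ i ∈ Icc (1:ℕ) k, (f y + ⟪g y, x i - y⟫) ≤
        ∑ i ∈ Icc (1:ℕ) k, f (x i) :=
      Finset.sum_le_sum fun i _ => hconv y (x i)
    have hsub : ∑ i ∈ Icc (1:ℕ) k, (x i - y) = 0 := by
      rw [Finset.sum_sub_distrib, Finset.sum_const, hcard, hydef]
      rw [← Nat.cast_smul_eq_nsmul ℝ, smul_smul]
      rw [mul_inv_cancel₀ (ne_of_gt hk0), one_smul, sub_self]
    have h2 : ∑ i ∈ Icc (1:ℕ) k, ⟪g y, x i - y⟫ = 0 := by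
      rw [← inner_sum, hsub, inner_zero_right]
    rw [Finset.sum_add_distrib, Finset.sum_const, hcard, h2, add_zero,
      nsmul_eq_mul] at h1
    have hfs : ∑ i ∈ Icc (1:ℕ) k, f (x i) = A + (k:ℝ) * fstar := by
      rw [hAdef, Finset.sum_sub_distrib, Finset.sum_const, hcard, nsmul_eq_mul]
      ring
    rw [hfs] at h1
    linarith [h1]
  -- final combination
  have hsk : (0:ℝ) < Real.sqrt k := Real.sqrt_pos.mpr hk0
  have hfinal : f y - fstar ≤ A / k := by
    rw [le_div_iff₀ hk0]; linarith [hjensen]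
  calc f y - fstar ≤ A / k := hfinal
    _ ≤ Real.sqrt k * (G / (1 - β) * R) / k := by gcongr
    _ = G * R / ((1 - β) * Real.sqrt k) := by
        have hkk : Real.sqrt k * Real.sqrt k = (k:ℝ) := Real.mul_self_sqrt hk0.le
        have h1 : Real.sqrt k / (k:ℝ) = 1 / Real.sqrt k := by
          rw [div_eq_div_iff hk0.ne' hsk.ne', one_mul, hkk]
        rw [mul_comm, mul_div_assoc, h1]
        rw [mul_one_div, div_eq_div_iff hsk.ne'
          (by positivity : ((1 - β) * Real.sqrt k) ≠ 0)]
        field_simp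
end

section
/- Suppose f is convex and differentiable, satisfies the polyhedral error bound ‖x - x*‖ ≤ (1/κ₁)(f(x) - f*) with κ₁ > 0, and has bounded gradients ‖∇f(x)‖ ≤ G with (1-β)²κ₁² < G². Then ALR-MAG with η_k = (f(x_k) - f*)/‖d_k‖² satisfies ‖x_{k+1} - x*‖² ≤ (1 - (1-β)²κ₁²/G²) ‖x_k - x*‖², i.e., linear convergence of the distance to the minimizer. -/
open scoped RealInnerProductSpace

/-- Linear convergence of ALR-MAG under a polyhedral error bound with bounded
gradients: per-step contraction of the squared distance with factor
`1 - (1-β)² κ₁² / G²`. -/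
theorem alr_mag_polyhedral_linear_convergence
    {E : Type*} [NormedAddCommGroup E] [InnerProductSpace ℝ E]
    (f : E → ℝ) (g : E → E) (G κ₁ : ℝ) (hG : 0 < G) (hκ₁ : 0 < κ₁)
    (hconv : ∀ y z : E, f y + ⟪g y, z - y⟫ ≤ f z)
    (hGbound : ∀ y : E, ‖g y‖ ≤ G)
    (xstar : E) (fstar : ℝ) (hfstar : fstar = f xstar)
    (hmin : ∀ y : E, f xstar ≤ f y)
    (herr : ∀ y : E, ‖y - xstar‖ ≤ (f y - fstar) / κ₁)
    (β : ℝ) (hβ : β ∈ Set.Ioo (0 : ℝ) 1)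
    (hsmall : (1 - β) ^ 2 * κ₁ ^ 2 < G ^ 2)
    (x d : ℕ → E) (η : ℕ → ℝ)
    (hd0 : d 0 = 0)
    (hd : ∀ k, 1 ≤ k → d k = g (x k) + β • d (k - 1))
    (hdne : ∀ k, 1 ≤ k → d k ≠ 0)
    (hη : ∀ k, 1 ≤ k → η k = (f (x k) - fstar) / ‖d k‖ ^ 2)
    (hx : ∀ k, 1 ≤ k → x (k + 1) = x k - η k • d k) :
    ∀ k, 1 ≤ k →
      ‖x (k + 1) - xstar‖ ^ 2 ≤
        (1 - (1 - β) ^ 2 * κ₁ ^ 2 / G ^ 2) * ‖x k - xstar‖ ^ 2 := by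
  obtain ⟨hβ0, hβ1⟩ := hβ
  have hβ' : 0 < 1 - β := by linarith
  -- bound on direction norms
  have hdbound : ∀ k, ‖d k‖ ≤ G / (1 - β) := by
    intro k
    induction k with
    | zero => simp only [hd0, norm_zero]; positivity
    | succ n ih =>
      have h := hd (n + 1) (by omega)
      simp only [Nat.add_sub_cancel] at h
      rw [h]
      calc ‖g (x (n + 1)) + β • d n‖ ≤ ‖g (x (n + 1))‖ + ‖β • d n‖ := norm_add_le _ _
        _ ≤ G + β * (G / (1 - β)) := by
            rw [norm_smul, Real.norm_eq_abs, abs_of_pos hβ0]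
            exact add_le_add (hGbound _) (mul_le_mul_of_nonneg_left ih hβ0.le)
        _ = G / (1 - β) := by field_simp; ring
  have hconv' : ∀ y : E, f y - fstar ≤ ⟪g y, y - xstar⟫ := by
    intro y
    have h1 := hconv y xstar
    have h2 : ⟪g y, xstar - y⟫ = -⟪g y, y - xstar⟫ := by
      rw [← inner_neg_right]; congr 1; abel
    rw [h2] at h1
    rw [hfstar]; linarith
  -- key inner product bound
  have hkey : ∀ k, 1 ≤ k → f (x k) - fstar ≤ ⟪d k, x k - xstar⟫ := by
    intro k hk
    induction k with
    | zero => omega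
    | succ n ih =>
      have h := hd (n + 1) (by omega)
      simp only [Nat.add_sub_cancel] at h
      rcases Nat.eq_zero_or_pos n with hn | hn
      · subst hn
        rw [h, hd0, smul_zero, add_zero]
        exact hconv' _
      · have ihn := ih hn
        have hxn := hx n hn
        have hdnen : ‖d n‖ ≠ 0 := norm_ne_zero_iff.mpr (hdne n hn)
        have hsplit : x (n + 1) - xstar = (x n - xstar) - η n • d n := by
          rw [hxn]; abel
        have hip : ⟪d n, x (n + 1) - xstar⟫
            = ⟪d n, x n - xstar⟫ - η n * ‖d n‖ ^ 2 := by
          rw [hsplit, inner_sub_right, real_inner_smul_right,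
            real_inner_self_eq_norm_sq]
        have hηn : η n * ‖d n‖ ^ 2 = f (x n) - fstar := by
          rw [hη n hn]; field_simp
        have hnonneg : 0 ≤ ⟪d n, x (n + 1) - xstar⟫ := by
          rw [hip, hηn]; linarith
        rw [h, inner_add_left, real_inner_smul_left]
        have := hconv' (x (n + 1))
        nlinarith [mul_nonneg hβ0.le hnonneg]
  -- main computation
  intro k hk
  set Δ := f (x k) - fstar with hΔdef
  set D := ‖d k‖ with hDdef
  set e := x k - xstar with hedef
  have hΔ0 : 0 ≤ Δ := by rw [hΔdef, hfstar]; linarith [hmin (x k)]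
  have hD0 : 0 < D := norm_pos_iff.mpr (hdne k hk)
  have hηk : η k = Δ / D ^ 2 := hη k hk
  have hsplit : x (k + 1) - xstar = e - η k • d k := by
    rw [hx k hk, hedef]; abel
  have hexp : ‖x (k + 1) - xstar‖ ^ 2
      = ‖e‖ ^ 2 - 2 * (η k * ⟪e, d k⟫) + η k ^ 2 * D ^ 2 := by
    rw [hsplit, norm_sub_sq_real, real_inner_smul_right, norm_smul,
      Real.norm_eq_abs, mul_pow, sq_abs]
  have hip : Δ ≤ ⟪e, d k⟫ := by
    rw [real_inner_comm]; exact hkey k hk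
  have hA : κ₁ * ‖e‖ ≤ Δ := by
    have := herr (x k)
    rw [← hedef, ← hΔdef] at this
    nlinarith [(le_div_iff₀ hκ₁).mp this]
  have hB : (1 - β) * D ≤ G := by
    have := hdbound k
    rw [← hDdef] at this
    nlinarith [(le_div_iff₀ hβ').mp this]
  have h1 : η k ^ 2 * D ^ 2 = Δ ^ 2 / D ^ 2 := by
    rw [hηk]; field_simp
  have h2 : 2 * (Δ / D ^ 2 * Δ) ≤ 2 * (η k * ⟪e, d k⟫) := by
    rw [hηk]
    have hη0 : 0 ≤ Δ / D ^ 2 := by positivity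
    nlinarith [mul_le_mul_of_nonneg_left hip hη0]
  have h3 : (1 - β) ^ 2 * κ₁ ^ 2 / G ^ 2 * ‖e‖ ^ 2 ≤ Δ ^ 2 / D ^ 2 := by
    rw [div_mul_eq_mul_div, div_le_div_iff₀ (by positivity) (by positivity)]
    have hA2 : (κ₁ * ‖e‖) ^ 2 ≤ Δ ^ 2 := pow_le_pow_left₀ (by positivity) hA 2
    have hB2 : ((1 - β) * D) ^ 2 ≤ G ^ 2 := pow_le_pow_left₀ (by positivity) hB 2
    calc (1 - β) ^ 2 * κ₁ ^ 2 * ‖e‖ ^ 2 * D ^ 2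
        = (κ₁ * ‖e‖) ^ 2 * ((1 - β) * D) ^ 2 := by ring
      _ ≤ Δ ^ 2 * G ^ 2 := mul_le_mul hA2 hB2 (by positivity) (sq_nonneg Δ)
  have hΔD : Δ / D ^ 2 * Δ = Δ ^ 2 / D ^ 2 := by field_simp
  rw [hexp]
  linarith [h1, h2, h3, hΔD]
end

section
/- Let each f_i be convex and differentiable with f_i* = inf f_i and common evaluation points x_k from the stochastic MAG recursion with step sizes η_k ≤ (f_{S_k}(x_k) - f_{S_k}*)/(c‖d_k‖²) for c > 0. Then for all k ≥ 2, ⟨d_{k-1}, x_k - x*⟩ ≥ (1 - 1/c) ∑_{i=1}^{k-1} β^{k-1-i}(f_{S_i}(x_i) - f_{S_i}*) + ∑_{i=1}^{k-1} β^{k-1-i}(f_{S_i}* - f_{S_i}(x*)). -/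
open Finset
open scoped RealInnerProductSpace

/-- Stochastic MAG lemma: with step sizes `η k ≤ (f_{S_k}(x_k) - f_{S_k}*)/(c ‖d k‖²)`,
the averaged direction satisfies the stated lower bound on `⟪d (k-1), x k - x*⟫`. -/
theorem smag_direction_lower_bound
    {E : Type*} [NormedAddCommGroup E] [InnerProductSpace ℝ E]
    (fS : ℕ → E → ℝ) (gS : ℕ → E → E) (fSstar : ℕ → ℝ)
    (hconv : ∀ i (y z : E), fS i y + ⟪gS i y, z - y⟫ ≤ fS i z)
    (hinf : ∀ i (y : E), fSstar i ≤ fS i y)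
    (xstar : E) (c : ℝ) (hc : 0 < c)
    (β : ℝ) (hβ : β ∈ Set.Ioo (0 : ℝ) 1)
    (x d : ℕ → E) (η : ℕ → ℝ)
    (hd0 : d 0 = 0)
    (hd : ∀ k, 1 ≤ k → d k = gS k (x k) + β • d (k - 1))
    (hdne : ∀ k, 1 ≤ k → d k ≠ 0)
    (hη : ∀ k, 1 ≤ k → η k ≤ (fS k (x k) - fSstar k) / (c * ‖d k‖ ^ 2))
    (hx : ∀ k, 1 ≤ k → x (k + 1) = x k - η k • d k) :
    ∀ k, 2 ≤ k →
      (1 - 1 / c) * (∑ i ∈ Icc 1 (k - 1), β ^ (k - 1 - i) * (fS i (x i) - fSstar i))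
        + (∑ i ∈ Icc 1 (k - 1), β ^ (k - 1 - i) * (fSstar i - fS i xstar))
        ≤ ⟪d (k - 1), x k - xstar⟫ := by
  have hβ0 : (0:ℝ) < β := hβ.1
  -- one-step estimate
  have step : ∀ k, 1 ≤ k →
      (1 - 1 / c) * (fS k (x k) - fSstar k) + (fSstar k - fS k xstar)
        + β * ⟪d (k - 1), x k - xstar⟫ ≤ ⟪d k, x (k + 1) - xstar⟫ := by
    intro k hk
    have hdk := hd k hk
    have hxk := hx k hk
    have hdne' : d k ≠ 0 := hdne k hk
    have hnp : (0:ℝ) < ‖d k‖ := norm_pos_iff.mpr hdne'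
    have hnorm : (0:ℝ) < ‖d k‖ ^ 2 := by positivity
    have hne : ‖d k‖ ≠ 0 := norm_ne_zero_iff.mpr hdne'
    have hstep : η k * ‖d k‖ ^ 2 ≤ (fS k (x k) - fSstar k) / c := by
      have h := hη k hk
      calc η k * ‖d k‖ ^ 2
          ≤ (fS k (x k) - fSstar k) / (c * ‖d k‖ ^ 2) * ‖d k‖ ^ 2 :=
            mul_le_mul_of_nonneg_right h (le_of_lt hnorm)
        _ = (fS k (x k) - fSstar k) / c := by
            field_simp
    have hconvk : fS k (x k) - fS k xstar ≤ ⟪gS k (x k), x k - xstar⟫ := by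
      have h := hconv k (x k) xstar
      have h2 : ⟪gS k (x k), xstar - x k⟫ = -⟪gS k (x k), x k - xstar⟫ := by
        rw [← inner_neg_right, neg_sub]
      rw [h2] at h
      linarith
    have hinner : ⟪d k, x (k + 1) - xstar⟫
        = ⟪gS k (x k), x k - xstar⟫ + β * ⟪d (k - 1), x k - xstar⟫
          - η k * ‖d k‖ ^ 2 := by
      rw [hxk, sub_right_comm, inner_sub_right, real_inner_smul_right,
        real_inner_self_eq_norm_sq]
      congr 1
      rw [hdk, inner_add_left, real_inner_smul_left]
    rw [hinner]
    have hc' : (1 - 1 / c) * (fS k (x k) - fSstar k)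
        = (fS k (x k) - fSstar k) - (fS k (x k) - fSstar k) / c := by
      field_simp
    linarith
  -- summation identity
  have sumlem : ∀ k, 1 ≤ k → ∀ a : ℕ → ℝ,
      (∑ i ∈ Icc 1 k, β ^ (k - i) * a i)
        = β * (∑ i ∈ Icc 1 (k - 1), β ^ (k - 1 - i) * a i) + a k := by
    intro k hk a
    obtain ⟨m, rfl⟩ : ∃ m, k = m + 1 := ⟨k - 1, by omega⟩
    rw [Finset.sum_Icc_succ_top (by omega : 1 ≤ m + 1)]
    simp only [Nat.add_sub_cancel, Nat.sub_self, pow_zero, one_mul]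
    congr 1
    rw [Finset.mul_sum]
    refine Finset.sum_congr rfl fun i hi => ?_
    have hi' : i ≤ m := (Finset.mem_Icc.mp hi).2
    have : m + 1 - i = (m - i) + 1 := by omega
    rw [this, pow_succ']
    ring
  intro k hk
  induction k, hk using Nat.le_induction with
  | base =>
    have h := step 1 le_rfl
    rw [hd0] at h
    simp only [inner_zero_left, mul_zero, add_zero] at h
    simpa using h
  | succ k hk ih =>
    have hk1 : 1 ≤ k := by omega
    simp only [Nat.add_sub_cancel]
    rw [sumlem k hk1, sumlem k hk1]
    have hs := step k hk1
    have hβI := mul_le_mul_of_nonneg_left ih (le_of_lt hβ0)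
    nlinarith [hs, hβI]
end

section
/- For a single-step (deterministic, full-batch) version of the result: if f is convex, differentiable, L-smooth, and the step size is η = min{(f(x) - f*)/(c‖∇f(x)‖²), η_max} with c > 1, then one step of gradient descent x⁺ = x - η∇f(x) satisfies ‖x⁺ - x*‖² ≤ ‖x - x*‖² - min{(c-1)/(c²L), (2 - 1/c)η_max}·(f(x) - f*). -/
/-!
Convexity gives `⟪∇f x, x - x*⟫ ≥ f x - f*`, so expanding the square shows that any step `η ≥ 0`
with `c η ‖∇f x‖² ≤ f x - f*` decreases `‖x - x*‖²` by at least `(2 - 1/c) η (f x - f*)`.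
The capped Polyak step satisfies this constraint, and the smoothness bound
`‖∇f x‖² ≤ 2L (f x - f*)` keeps its uncapped branch at least `1/(2cL)`, whence
`(2 - 1/c) η ≥ min ((c - 1)/(c²L)) ((2 - 1/c) η_max)`.
-/

open scoped RealInnerProductSpace

section GradientStep

variable {E : Type*} [NormedAddCommGroup E] [InnerProductSpace ℝ E]

/-- The descent lemma evaluated at the gradient step `x - L⁻¹ • g`. -/
lemma norm_sq_le_two_mul_sub_of_smooth {f : E → ℝ} {g x : E} {L m : ℝ} (hL : 0 < L)
    (hsmooth : ∀ z, f z ≤ f x + ⟪g, z - x⟫ + L / 2 * ‖z - x‖ ^ 2) (hm : ∀ y, m ≤ f y) :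
    ‖g‖ ^ 2 ≤ 2 * L * (f x - m) := by
  have hstep : f (x - L⁻¹ • g) ≤ f x - ‖g‖ ^ 2 / (2 * L) := by
    have h := hsmooth (x - L⁻¹ • g)
    rw [sub_sub_cancel_left, inner_neg_right, real_inner_smul_right, real_inner_self_eq_norm_sq,
      norm_neg, norm_smul, mul_pow, Real.norm_eq_abs, sq_abs] at h
    convert h using 1
    field_simp
    ring
  have := (div_le_iff₀ (by positivity : (0 : ℝ) < 2 * L)).mp
    (by linarith [hm (x - L⁻¹ • g)] : ‖g‖ ^ 2 / (2 * L) ≤ f x - m)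
  linarith

lemma norm_sub_smul_sub_sq_le {f : E → ℝ} {g x xstar : E} {η c : ℝ}
    (hconv : f x + ⟪g, xstar - x⟫ ≤ f xstar) (hη : 0 ≤ η) (hc : 0 < c)
    (hstep : c * η * ‖g‖ ^ 2 ≤ f x - f xstar) :
    ‖x - η • g - xstar‖ ^ 2 ≤ ‖x - xstar‖ ^ 2 - (2 - 1 / c) * η * (f x - f xstar) := by
  have hinner : f x - f xstar ≤ ⟪x - xstar, g⟫ := by
    rw [real_inner_comm, ← neg_sub xstar x, inner_neg_right]
    linarith
  have hquad : η ^ 2 * ‖g‖ ^ 2 ≤ η * (f x - f xstar) / c := by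
    rw [le_div_iff₀ hc]
    nlinarith
  calc ‖x - η • g - xstar‖ ^ 2
      = ‖x - xstar‖ ^ 2 - 2 * η * ⟪x - xstar, g⟫ + η ^ 2 * ‖g‖ ^ 2 := by
        rw [sub_right_comm, norm_sub_sq_real, real_inner_smul_right, norm_smul, mul_pow,
          Real.norm_eq_abs, sq_abs]
        ring
    _ ≤ ‖x - xstar‖ ^ 2 - 2 * η * (f x - f xstar) + η * (f x - f xstar) / c := by
        gcongr
    _ = ‖x - xstar‖ ^ 2 - (2 - 1 / c) * η * (f x - f xstar) := by ring

end GradientStep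

lemma min_le_mul_min_polyak {Δ G L c ηmax : ℝ} (hL : 0 < L) (hc : 1 < c) (hG : 0 < G)
    (hGΔ : G ≤ 2 * L * Δ) :
    min ((c - 1) / (c ^ 2 * L)) ((2 - 1 / c) * ηmax) ≤ (2 - 1 / c) * min (Δ / (c * G)) ηmax := by
  have hc0 : 0 < c := by linarith
  have hcoef : 0 < 2 - 1 / c := by
    have : 1 / c < 1 := (div_lt_one hc0).mpr hc
    linarith
  rw [mul_min_of_nonneg _ _ hcoef.le]
  refine min_le_min ?_ le_rfl
  calc (c - 1) / (c ^ 2 * L) ≤ (2 - 1 / c) * (1 / (2 * c * L)) := by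
        rw [div_le_iff₀ (by positivity)]
        field_simp
        linarith
    _ ≤ (2 - 1 / c) * (Δ / (c * G)) := by
        refine mul_le_mul_of_nonneg_left ?_ hcoef.le
        rw [div_le_div_iff₀ (by positivity) (by positivity)]
        nlinarith

/-- One step of gradient descent with the capped stochastic-Polyak-type step size
`η = min ((f x - f*)/(c ‖∇f x‖²)) η_max` (deterministic, full-batch case). -/
theorem capped_polyak_step_decrease
    {E : Type*} [NormedAddCommGroup E] [InnerProductSpace ℝ E]
    (f : E → ℝ) (g : E → E) (L : ℝ) (hL : 0 < L)
    (hconv : ∀ y z : E, f y + ⟪g y, z - y⟫ ≤ f z)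
    (hsmooth : ∀ y z : E, f z ≤ f y + ⟪g y, z - y⟫ + L / 2 * ‖z - y‖ ^ 2)
    (xstar : E) (fstar : ℝ) (hfstar : fstar = f xstar)
    (hmin : ∀ y : E, f xstar ≤ f y)
    (c ηmax : ℝ) (hc : 1 < c) (hηmax : 0 < ηmax)
    (x : E) (hg : g x ≠ 0)
    (η : ℝ) (hη : η = min ((f x - fstar) / (c * ‖g x‖ ^ 2)) ηmax)
    (xplus : E) (hxplus : xplus = x - η • g x) :
    ‖xplus - xstar‖ ^ 2 ≤
      ‖x - xstar‖ ^ 2 -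
        min ((c - 1) / (c ^ 2 * L)) ((2 - 1 / c) * ηmax) * (f x - fstar) := by
  subst hfstar hxplus
  have hc0 : 0 < c := by linarith
  have hG : 0 < ‖g x‖ ^ 2 := by positivity
  have hGΔ := norm_sq_le_two_mul_sub_of_smooth hL (hsmooth x) hmin
  have hΔ : 0 < f x - f xstar := by nlinarith
  have hη0 : 0 ≤ η := hη ▸ le_min (by positivity) hηmax.le
  have hstep : c * η * ‖g x‖ ^ 2 ≤ f x - f xstar := by
    have := hη ▸ min_le_left _ ηmax
    rw [le_div_iff₀ (by positivity)] at this
    linarith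
  calc ‖x - η • g x - xstar‖ ^ 2
      ≤ ‖x - xstar‖ ^ 2 - (2 - 1 / c) * η * (f x - f xstar) :=
        norm_sub_smul_sub_sq_le (hconv x xstar) hη0 hc0 hstep
    _ ≤ _ := by
        gcongr
        exact hη ▸ min_le_mul_min_polyak hL hc hG hGΔ
end

section
/- Suppose f is ζ-quasar convex with respect to its minimizer x* (i.e., f* ≥ f(x) + (1/ζ)⟨∇f(x), x* - x⟩ for all x) and L-smooth, with ζ ∈ (0,1] and c > 1/ζ. Then deterministic MAG with η_k = (f(x_k) - f*)/(c‖d_k‖²) satisfies min_{1≤i≤K} f(x_i) - f* ≤ (Lc²/((1-β)(ζc - 1))) · ‖x_1 - x*‖²/K. -/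
open Finset
open scoped RealInnerProductSpace

/-- Weighted geometric sum `S k = ∑_{j=1}^k β^{k-j} Δ j`, defined recursively. -/
def magS (β : ℝ) (Δ : ℕ → ℝ) : ℕ → ℝ
  | 0 => 0
  | (n+1) => Δ (n+1) + β * magS β Δ n

lemma magS_nonneg (β : ℝ) (Δ : ℕ → ℝ) (hβ : 0 ≤ β) (hΔ : ∀ k, 0 ≤ Δ k) :
    ∀ n, 0 ≤ magS β Δ n := by
  intro n; induction n with
  | zero => simp [magS]
  | succ n ih => simpa [magS] using add_nonneg (hΔ (n+1)) (mul_nonneg hβ ih)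

lemma grad_sq_le {E : Type*} [NormedAddCommGroup E] [InnerProductSpace ℝ E]
    (f : E → ℝ) (gy : E) (y : E) (L fstar : ℝ) (hL : 0 < L)
    (hlow : ∀ z : E, fstar ≤ f z)
    (hsm : ∀ z : E, f z ≤ f y + ⟪gy, z - y⟫ + L / 2 * ‖z - y‖ ^ 2) :
    ‖gy‖ ^ 2 ≤ 2 * L * (f y - fstar) := by
  have h := hsm (y - (1 / L) • gy)
  have hz : y - (1 / L) • gy - y = -((1 / L) • gy) := by abel
  rw [hz, inner_neg_right, real_inner_smul_right, real_inner_self_eq_norm_sq,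
    norm_neg, norm_smul, Real.norm_eq_abs, abs_of_pos (by positivity : (0:ℝ) < 1/L),
    mul_pow] at h
  have h2 := hlow (y - (1 / L) • gy)
  have hL' : L ≠ 0 := ne_of_gt hL
  have h5 : 1/L*‖gy‖^2 - L/2*(1/L^2*‖gy‖^2) = ‖gy‖^2/(2*L) := by
    field_simp; ring
  have h6 : ‖gy‖^2/(2*L) ≤ f y - fstar := by
    rw [div_pow, one_pow] at h; linarith
  rw [div_le_iff₀ (by positivity : (0:ℝ) < 2*L)] at h6
  nlinarith [h6]


/- `O(1/K)` convergence of deterministic MAG with step size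
`η k = (f (x k) - f*)/(c ‖d k‖²)` for `ζ`-quasar convex, `L`-smooth functions. -/
set_option maxHeartbeats 1000000 in
/-- `O(1/K)` convergence of deterministic MAG with step size
`η k = (f (x k) - f*)/(c ‖d k‖²)` for `ζ`-quasar convex, `L`-smooth functions. -/
theorem alr_mag_quasar_convex_rate
    {E : Type*} [NormedAddCommGroup E] [InnerProductSpace ℝ E]
    (f : E → ℝ) (g : E → E) (L ζ c : ℝ) (hL : 0 < L)
    (hζ : ζ ∈ Set.Ioc (0 : ℝ) 1) (hc : 1 / ζ < c)
    (xstar : E) (fstar : ℝ) (hfstar : fstar = f xstar)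
    (hmin : ∀ y : E, f xstar ≤ f y)
    (hquasar : ∀ y : E, f y + (1 / ζ) * ⟪g y, xstar - y⟫ ≤ fstar)
    (hsmooth : ∀ y z : E, f z ≤ f y + ⟪g y, z - y⟫ + L / 2 * ‖z - y‖ ^ 2)
    (β : ℝ) (hβ : β ∈ Set.Ioo (0 : ℝ) 1)
    (x d : ℕ → E) (η : ℕ → ℝ)
    (hd0 : d 0 = 0)
    (hd : ∀ k, 1 ≤ k → d k = g (x k) + β • d (k - 1))
    (hdne : ∀ k, 1 ≤ k → d k ≠ 0)
    (hη : ∀ k, 1 ≤ k → η k = (f (x k) - fstar) / (c * ‖d k‖ ^ 2))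
    (hx : ∀ k, 1 ≤ k → x (k + 1) = x k - η k • d k) :
    ∀ K : ℕ, 1 ≤ K →
      ∃ i ∈ Icc 1 K,
        f (x i) - fstar ≤
          (L * c ^ 2 / ((1 - β) * (ζ * c - 1))) * ‖x 1 - xstar‖ ^ 2 / K := by
  obtain ⟨hζ0, hζ1⟩ := hζ
  obtain ⟨hβ0, hβ1⟩ := hβ
  have h1β : (0:ℝ) < 1 - β := by linarith
  have hc0 : (0:ℝ) < c := lt_trans (by positivity) hc
  have hζc : 1 < ζ * c := by
    have h := (div_lt_iff₀ hζ0).mp hc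
    nlinarith [h]
  have hζinvc : 1/c < ζ := by
    rw [div_lt_iff₀ hc0]; linarith
  -- opaque abbreviations
  obtain ⟨Δ, hΔk⟩ : ∃ Δ : ℕ → ℝ, ∀ k, Δ k = f (x k) - fstar := ⟨_, fun _ => rfl⟩
  obtain ⟨r, hrk⟩ : ∃ r : ℕ → ℝ, ∀ k, r k = ‖x k - xstar‖ ^ 2 := ⟨_, fun _ => rfl⟩
  obtain ⟨S, hS0, hSsucc⟩ :
      ∃ S : ℕ → ℝ, S 0 = 0 ∧ ∀ n, S (n+1) = Δ (n+1) + β * S n :=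
    ⟨magS β Δ, rfl, fun _ => rfl⟩
  have hΔ0 : ∀ k, 0 ≤ Δ k := by
    intro k; have := hmin (x k); rw [hΔk, hfstar]; linarith
  have hSnn : ∀ n, 0 ≤ S n := by
    intro n; induction n with
    | zero => rw [hS0]
    | succ n ih =>
      rw [hSsucc]
      exact add_nonneg (hΔ0 (n+1)) (mul_nonneg hβ0.le ih)
  have hgsq : ∀ k, ‖g (x k)‖ ^ 2 ≤ 2 * L * Δ k := by
    intro k
    rw [hΔk]
    exact grad_sq_le f (g (x k)) (x k) L fstar hL
      (fun z => hfstar ▸ hmin z) (fun z => hsmooth (x k) z)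
  have hquasar' : ∀ k, ζ * Δ k ≤ ⟪g (x k), x k - xstar⟫ := by
    intro k
    have h := hquasar (x k)
    rw [show xstar - x k = -(x k - xstar) by abel, inner_neg_right] at h
    have h2 : Δ k ≤ (1/ζ) * ⟪g (x k), x k - xstar⟫ := by
      rw [hΔk]; linarith
    have h3 := mul_le_mul_of_nonneg_left h2 hζ0.le
    calc ζ * Δ k ≤ ζ * ((1/ζ) * ⟪g (x k), x k - xstar⟫) := h3
      _ = ⟪g (x k), x k - xstar⟫ := by field_simp
  have hd_eq : ∀ n : ℕ, d (n+1) = g (x (n+1)) + β • d n := by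
    intro n; simpa using hd (n+1) (by omega)
  have hη' : ∀ n : ℕ, η (n+1) = Δ (n+1) / (c * ‖d (n+1)‖ ^ 2) := by
    intro n; rw [hΔk]; exact hη (n+1) (by omega)
  have hdnorm : ∀ n : ℕ, 0 < ‖d (n+1)‖ ^ 2 := by
    intro n
    exact pow_pos (norm_pos_iff.mpr (hdne (n+1) (by omega))) 2
  have hηd : ∀ n : ℕ, η (n+1) * ‖d (n+1)‖ ^ 2 = Δ (n+1) / c := by
    intro n
    rw [hη', div_mul_eq_mul_div, mul_comm c (‖d (n+1)‖^2), ← div_div,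
      mul_div_assoc, div_self (ne_of_gt (hdnorm n)), mul_one]
  have hη0 : ∀ n : ℕ, 0 ≤ η (n+1) := by
    intro n; rw [hη']
    exact div_nonneg (hΔ0 (n+1)) (by positivity)
  -- main invariant
  have main : ∀ n : ℕ,
      (1-β) * ‖d (n+1)‖ ^ 2 ≤ 2 * L * S (n+1) ∧
      ζ * Δ (n+1) + (ζ - 1/c) * β * S n ≤ ⟪d (n+1), x (n+1) - xstar⟫ := by
    intro n
    induction n with
    | zero =>
      have hd1 : d 1 = g (x 1) := by rw [hd_eq 0, hd0, smul_zero, add_zero]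
      constructor
      · show (1-β) * ‖d 1‖ ^ 2 ≤ 2 * L * S 1
        rw [hd1, hSsucc, hS0]
        nlinarith [hgsq 1, hΔ0 1, mul_nonneg hβ0.le (sq_nonneg ‖g (x 1)‖)]
      · show ζ * Δ 1 + (ζ - 1/c) * β * S 0 ≤ ⟪d 1, x 1 - xstar⟫
        rw [hd1, hS0]
        linarith [hquasar' 1]
    | succ n ih =>
      obtain ⟨ihA, ihB⟩ := ih
      have hdk : d (n+2) = g (x (n+2)) + β • d (n+1) := hd_eq (n+1)
      have hstep : x (n+2) = x (n+1) - η (n+1) • d (n+1) := hx (n+1) (by omega)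
      have hinner : ⟪d (n+1), x (n+2) - xstar⟫
          = ⟪d (n+1), x (n+1) - xstar⟫ - η (n+1) * ‖d (n+1)‖ ^ 2 := by
        rw [hstep, show x (n+1) - η (n+1) • d (n+1) - xstar
            = (x (n+1) - xstar) - η (n+1) • d (n+1) by abel,
          inner_sub_right, real_inner_smul_right, real_inner_self_eq_norm_sq]
      constructor
      · -- norm bound
        have htri : ‖d (n+2)‖ ≤ ‖g (x (n+2))‖ + β * ‖d (n+1)‖ := by
          rw [hdk]
          calc ‖g (x (n+2)) + β • d (n+1)‖ ≤ ‖g (x (n+2))‖ + ‖β • d (n+1)‖ :=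
                norm_add_le _ _
            _ = ‖g (x (n+2))‖ + β * ‖d (n+1)‖ := by
                rw [norm_smul, Real.norm_eq_abs, abs_of_pos hβ0]
        have hsq : ‖d (n+2)‖ ^ 2 ≤ (‖g (x (n+2))‖ + β * ‖d (n+1)‖) ^ 2 :=
          pow_le_pow_left₀ (norm_nonneg _) htri 2
        have key : (1-β) * (‖g (x (n+2))‖ + β * ‖d (n+1)‖) ^ 2
            ≤ ‖g (x (n+2))‖ ^ 2 + β * ((1-β) * ‖d (n+1)‖ ^ 2) := by
          nlinarith [mul_nonneg hβ0.le
            (sq_nonneg (‖g (x (n+2))‖ - (1-β) * ‖d (n+1)‖))]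
        have hb2 : β * ((1-β) * ‖d (n+1)‖ ^ 2) ≤ β * (2 * L * S (n+1)) :=
          mul_le_mul_of_nonneg_left ihA hβ0.le
        have hsq2 : (1-β) * ‖d (n+2)‖ ^ 2
            ≤ (1-β) * (‖g (x (n+2))‖ + β * ‖d (n+1)‖) ^ 2 :=
          mul_le_mul_of_nonneg_left hsq h1β.le
        rw [hSsucc (n+1)]
        nlinarith [hsq2, key, hb2, hgsq (n+2)]
      · -- inner product bound
        have hlow : (ζ - 1/c) * S (n+1) ≤ ⟪d (n+1), x (n+2) - xstar⟫ := by
          rw [hinner, hηd n, hSsucc n]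
          linarith [ihB, show (ζ - 1/c) * (Δ (n+1) + β * S n)
            = ζ * Δ (n+1) - Δ (n+1)/c + (ζ - 1/c) * β * S n from by ring]
        rw [hdk, inner_add_left, real_inner_smul_left]
        have h1 := hquasar' (n+2)
        have h2 := mul_le_mul_of_nonneg_left hlow hβ0.le
        linarith [h1, h2, show β * ((ζ - 1/c) * S (n+1))
          = (ζ - 1/c) * β * S (n+1) from by ring]
  -- per-step descent
  have step : ∀ n : ℕ,
      (1-β) * (ζ*c - 1) / (L * c^2) * Δ (n+1) ≤ r (n+1) - r (n+2) := by
    intro n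
    obtain ⟨hA, hB⟩ := main n
    have hstep : x (n+2) = x (n+1) - η (n+1) • d (n+1) := hx (n+1) (by omega)
    have hexp : r (n+2) = r (n+1) - 2 * (η (n+1) * ⟪d (n+1), x (n+1) - xstar⟫)
        + η (n+1) * (Δ (n+1) / c) := by
      rw [hrk, hrk, hstep, show x (n+1) - η (n+1) • d (n+1) - xstar
          = (x (n+1) - xstar) - η (n+1) • d (n+1) by abel,
        norm_sub_sq_real, real_inner_smul_right, norm_smul, Real.norm_eq_abs,
        mul_pow, sq_abs, ← hηd n]
      rw [real_inner_comm]
      ring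
    have hη0' := hη0 n
    have hmono := mul_le_mul_of_nonneg_left hB hη0'
    have hextra : 0 ≤ (1/c) * (η (n+1) * Δ (n+1)) :=
      mul_nonneg (by positivity) (mul_nonneg hη0' (hΔ0 (n+1)))
    -- r (n+1) - r (n+2) ≥ 2 (ζ - 1/c) η S
    have hmid : 2 * ((ζ - 1/c) * (η (n+1) * (Δ (n+1) + β * S n)))
        ≤ r (n+1) - r (n+2) := by
      rw [hexp]
      linarith [hmono, hextra,
        show (ζ - 1/c) * (η (n+1) * (Δ (n+1) + β * S n))
          = η (n+1) * (ζ * Δ (n+1) + (ζ - 1/c) * β * S n)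
            - (1/c) * (η (n+1) * Δ (n+1)) + η (n+1) * Δ (n+1) * (1/c)
            - η (n+1) * Δ (n+1) * (1/c) from by ring,
        show η (n+1) * (Δ (n+1) / c) = (1/c) * (η (n+1) * Δ (n+1)) from by ring]
    -- η S ≥ (1-β) Δ / (2 L c)
    have hηS : (1-β) * Δ (n+1) / (2 * L * c) ≤ η (n+1) * (Δ (n+1) + β * S n) := by
      rw [← hSsucc n, hη', div_mul_eq_mul_div,
        div_le_div_iff₀ (mul_pos (mul_pos two_pos hL) hc0)
          (mul_pos hc0 (hdnorm n))]
      have h4 := mul_le_mul_of_nonneg_left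
        (mul_le_mul_of_nonneg_left hA (hΔ0 (n+1))) hc0.le
      linarith [h4]
    have hfin : 2 * ((ζ - 1/c) * ((1-β) * Δ (n+1) / (2 * L * c)))
        ≤ r (n+1) - r (n+2) := by
      have hnn : 0 ≤ ζ - 1/c := by linarith
      have := mul_le_mul_of_nonneg_left hηS hnn
      linarith [hmid, this]
    have heq : 2 * ((ζ - 1/c) * ((1-β) * Δ (n+1) / (2 * L * c)))
        = (1-β) * (ζ*c - 1) / (L * c^2) * Δ (n+1) := by
      field_simp
    linarith [hfin, heq.symm.le]
  have htel : ∀ m : ℕ, ∑ n ∈ range m, (r (n+1) - r (n+2)) = r 1 - r (m+1) := by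
    intro m
    induction m with
    | zero => simp
    | succ m ih => rw [Finset.sum_range_succ, ih]; ring
  have hIcc : ∀ m : ℕ, ∑ n ∈ range m, Δ (n+1) = ∑ k ∈ Icc 1 m, Δ k := by
    intro m
    induction m with
    | zero => simp
    | succ m ih =>
      rw [Finset.sum_range_succ, ih, Finset.sum_Icc_succ_top (by omega : 1 ≤ m+1)]
  intro K hK
  have hCpos : 0 < (1-β) * (ζ*c - 1) / (L * c^2) :=
    div_pos (by nlinarith) (by positivity)
  set C : ℝ := (1-β) * (ζ*c - 1) / (L * c^2) with hCdef
  have hsum : C * ∑ n ∈ range K, Δ (n+1) ≤ r 1 := by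
    rw [mul_sum]
    calc ∑ n ∈ range K, C * Δ (n+1) ≤ ∑ n ∈ range K, (r (n+1) - r (n+2)) :=
          sum_le_sum (fun n _ => step n)
      _ = r 1 - r (K+1) := htel K
      _ ≤ r 1 := by
          have h5 : 0 ≤ r (K+1) := by rw [hrk]; positivity
          linarith
  obtain ⟨i, hiI, hile⟩ := Finset.exists_min_image (Icc 1 K) Δ ⟨1, by simp [hK]⟩
  refine ⟨i, hiI, ?_⟩
  have hsum_eq : ∑ n ∈ range K, Δ (n+1) = ∑ k ∈ Icc 1 K, Δ k := hIcc K
  have hKΔ : (K : ℝ) * Δ i ≤ ∑ k ∈ Icc 1 K, Δ k := by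
    have h6 := Finset.card_nsmul_le_sum (Icc 1 K) Δ (Δ i) (fun k hk => hile k hk)
    rwa [Nat.card_Icc, Nat.add_sub_cancel, nsmul_eq_mul] at h6
  have hK0 : (0:ℝ) < K := by exact_mod_cast hK
  have hfinal : Δ i ≤ r 1 / C / K := by
    rw [div_div, le_div_iff₀ (by positivity)]
    calc Δ i * (C * K) = C * ((K:ℝ) * Δ i) := by ring
      _ ≤ C * ∑ k ∈ Icc 1 K, Δ k := mul_le_mul_of_nonneg_left hKΔ hCpos.le
      _ = C * ∑ n ∈ range K, Δ (n+1) := by rw [hsum_eq]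
      _ ≤ r 1 := hsum
  have htarget : r 1 / C / K
      = L * c ^ 2 / ((1 - β) * (ζ * c - 1)) * ‖x 1 - xstar‖ ^ 2 / K := by
    have hne1 : (1-β) ≠ 0 := ne_of_gt h1β
    have hne2 : ζ*c - 1 ≠ 0 := ne_of_gt (by linarith)
    have hne3 : L ≠ 0 := ne_of_gt hL
    have hne4 : c ≠ 0 := ne_of_gt hc0
    have hne5 : (K:ℝ) ≠ 0 := ne_of_gt hK0
    rw [hrk, hCdef]
    field_simp
  rw [← hΔk, ← htarget]
  exact hfinal
end

section
/- Consider the quadratic f(x) = (1/2)(x-x*)ᵀA(x-x*) + f* with A symmetric positive definite and ∇f(x) = A(x - x*). The heavy-ball iteration with truncated ALR-HB(v2) step size η_k = α̂ + η̃_k, where α̂ = (2-β)/(2L), L = λ_max(A), and η̃_k = max{0, (f(x_k)-f*)/‖∇f(x_k)‖² + β⟨∇f(x_k), x_k - x_{k-1}⟩/‖∇f(x_k)‖² - (1-β)/(2L)}, satisfies ‖(x_{k+1}-x*, x_k-x*)‖² ≤ ‖D (x_k-x*, x_{k-1}-x*)‖² - η̃_k² ‖∇f(x_k)‖², where D is the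 2d×2d block matrix [[(1+β)I - α̂A, -βI],[I, 0]]. -/
open scoped RealInnerProductSpace

private lemma cs_aux {E : Type*} [NormedAddCommGroup E] [InnerProductSpace ℝ E]
    (A : E →ₗ[ℝ] E)
    (hsym : ∀ v w : E, ⟪A v, w⟫ = ⟪v, A w⟫)
    (hpos : ∀ v : E, v ≠ 0 → 0 < ⟪A v, v⟫)
    (u v : E) : ⟪A u, v⟫ ^ 2 ≤ ⟪A u, u⟫ * ⟪A v, v⟫ := by
  have hnn : ∀ w : E, 0 ≤ ⟪A w, w⟫ := by
    intro w
    by_cases h : w = 0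
    · simp [h]
    · exact (hpos w h).le
  by_cases hv : v = 0
  · simp [hv]
  · have hc : 0 < ⟪A v, v⟫ := hpos v hv
    set t : ℝ := ⟪A u, v⟫ / ⟪A v, v⟫ with ht
    have h0 : 0 ≤ ⟪A (u - t • v), u - t • v⟫ := hnn _
    have hcomm : ⟪A v, u⟫ = ⟪A u, v⟫ := by
      rw [hsym v u, real_inner_comm]
    have hexp : ⟪A (u - t • v), u - t • v⟫
        = ⟪A u, u⟫ - 2 * t * ⟪A u, v⟫ + t ^ 2 * ⟪A v, v⟫ := by
      simp only [map_sub, map_smul, inner_sub_left, inner_sub_right,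
        inner_smul_left, inner_smul_right, RCLike.conj_to_real]
      rw [hcomm]
      ring
    rw [hexp, ht] at h0
    have h1 : ⟪A u, u⟫ - 2 * (⟪A u, v⟫ / ⟪A v, v⟫) * ⟪A u, v⟫
        + (⟪A u, v⟫ / ⟪A v, v⟫) ^ 2 * ⟪A v, v⟫
        = ⟪A u, u⟫ - ⟪A u, v⟫ ^ 2 / ⟪A v, v⟫ := by
      field_simp
      ring
    rw [h1] at h0
    have := (div_le_iff₀ hc).mp (by linarith : ⟪A u, v⟫ ^ 2 / ⟪A v, v⟫ ≤ ⟪A u, u⟫)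
    linarith [this]

set_option maxHeartbeats 1000000 in
/-- Heavy-ball with the truncated ALR-HB(v2) step size on a quadratic
`f x = (1/2)⟪x - x*, A(x - x*)⟫ + f*` (A symmetric positive definite,
`L = λ_max(A)`): the squared norm of the stacked iterate pair is bounded by that
of its image under the heavy-ball block matrix `D`, minus `η̃_k² ‖∇f(x_k)‖²`. -/
theorem alr_hb_v2_quadratic_contraction
    {E : Type*} [NormedAddCommGroup E] [InnerProductSpace ℝ E]
    (A : E →ₗ[ℝ] E)
    (hsym : ∀ v w : E, ⟪A v, w⟫ = ⟪v, A w⟫)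
    (hpos : ∀ v : E, v ≠ 0 → 0 < ⟪A v, v⟫)
    (L : ℝ) (hL : 0 < L) (hLmax : ∀ v : E, ⟪A v, v⟫ ≤ L * ‖v‖ ^ 2)
    (xstar : E) (fstar : ℝ)
    (f : E → ℝ) (hf : ∀ y, f y = 1 / 2 * ⟪y - xstar, A (y - xstar)⟫ + fstar)
    (β : ℝ) (hβ : β ∈ Set.Ioo (0 : ℝ) 1)
    (x : ℕ → E) (η ηt : ℕ → ℝ)
    (hηt : ∀ k, 1 ≤ k → ηt k =
      max 0 ((f (x k) - fstar) / ‖A (x k - xstar)‖ ^ 2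
        + β * ⟪A (x k - xstar), x k - x (k - 1)⟫ / ‖A (x k - xstar)‖ ^ 2
        - (1 - β) / (2 * L)))
    (hη : ∀ k, 1 ≤ k → η k = (2 - β) / (2 * L) + ηt k)
    (hx : ∀ k, 1 ≤ k →
      x (k + 1) = x k - η k • A (x k - xstar) + β • (x k - x (k - 1))) :
    ∀ k, 1 ≤ k →
      ‖x (k + 1) - xstar‖ ^ 2 + ‖x k - xstar‖ ^ 2 ≤
        (‖(1 + β) • (x k - xstar) - ((2 - β) / (2 * L)) • A (x k - xstar)
            - β • (x (k - 1) - xstar)‖ ^ 2 + ‖x k - xstar‖ ^ 2)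
          - (ηt k) ^ 2 * ‖A (x k - xstar)‖ ^ 2 := by
  intro k hk
  have hβ0 := hβ.1
  have hβ1 := hβ.2
  set v : E := x k - xstar with hv
  set g : E := A (x k - xstar) with hg
  set α : ℝ := (2 - β) / (2 * L) with hα
  set W : E := (1 + β) • v - α • g - β • (x (k - 1) - xstar) with hW
  -- iterate identity
  have hiter : x (k + 1) - xstar = W - ηt k • g := by
    rw [hx k hk, hη k hk, hW, hv, hg, hα]
    module
  -- expand the square
  have hsq : ‖x (k + 1) - xstar‖ ^ 2
      = ‖W‖ ^ 2 - 2 * (ηt k * ⟪W, g⟫) + ηt k ^ 2 * ‖g‖ ^ 2 := by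
    rw [hiter, norm_sub_sq_real, inner_smul_right, norm_smul]
    rw [mul_pow, Real.norm_eq_abs, sq_abs]
  -- nonnegativity of ηt
  have hηt0 : 0 ≤ ηt k := by rw [hηt k hk]; exact le_max_left _ _
  -- key claim: ηt k * (ηt k * ‖g‖^2) ≤ ηt k * ⟪W, g⟫
  have hkeyprod : ηt k * (ηt k * ‖g‖ ^ 2) ≤ ηt k * ⟪W, g⟫ := by
    rcases eq_or_lt_of_le hηt0 with h0 | hηpos
    · rw [← h0]; ring_nf; rfl
    · -- ηt k > 0, hence the max is attained at the formula and g ≠ 0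
      have hE : ηt k = (f (x k) - fstar) / ‖g‖ ^ 2
          + β * ⟪g, x k - x (k - 1)⟫ / ‖g‖ ^ 2 - (1 - β) / (2 * L) := by
        have h := hηt k hk
        rcases max_choice (0 : ℝ) ((f (x k) - fstar) / ‖A (x k - xstar)‖ ^ 2
            + β * ⟪A (x k - xstar), x k - x (k - 1)⟫ / ‖A (x k - xstar)‖ ^ 2
            - (1 - β) / (2 * L)) with hc | hc
        · rw [h, hc] at hηpos; exact absurd hηpos (lt_irrefl 0)
        · rw [h, hc]
      have hgne : g ≠ 0 := by
        intro hg0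
        rw [hg0] at hE
        have hfx : f (x k) - fstar = 0 := by
          rw [hf (x k)]
          have : A (x k - xstar) = 0 := by rw [← hg, hg0]
          rw [real_inner_comm, ← hg, hg0]
          simp
        rw [hfx] at hE
        simp at hE
        have : (0:ℝ) < (1 - β) / (2 * L) := div_pos (by linarith) (by linarith)
        rw [hE] at hηpos
        linarith
      have hgnorm : (0:ℝ) < ‖g‖ ^ 2 := pow_pos (norm_pos_iff.mpr hgne) 2
      -- key quadratic inequality: ‖g‖² ≤ L * ⟪g, v⟫
      have hcs := cs_aux A hsym hpos g v
      have h1 : ⟪A g, v⟫ = ‖g‖ ^ 2 := by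
        rw [hsym g v, ← hg, ← real_inner_self_eq_norm_sq]
      have h2 : ⟪A g, g⟫ ≤ L * ‖g‖ ^ 2 := hLmax g
      have h3 : 0 ≤ ⟪A g, g⟫ := by
        by_cases h : g = 0
        · simp [h]
        · exact (hpos g h).le
      have hAvv : ⟪A v, v⟫ = ⟪g, v⟫ := by rw [hg, hv]
      have hgv0 : 0 ≤ ⟪g, v⟫ := by
        rw [← hAvv]
        by_cases h : v = 0
        · simp [h]
        · exact (hpos v h).le
      have hkey : ‖g‖ ^ 2 ≤ L * ⟪g, v⟫ := by
        rw [h1, hAvv] at hcs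
        nlinarith [hgnorm, hL]
      -- value of f
      have hfx : f (x k) - fstar = 1 / 2 * ⟪g, v⟫ := by
        rw [hf (x k)]
        rw [real_inner_comm]
        rw [← hg, ← hv]
        ring
      -- expand ⟪W, g⟫
      have hWg : ⟪W, g⟫ = ⟪v, g⟫ + β * ⟪x k - x (k - 1), g⟫ - α * ‖g‖ ^ 2 := by
        have hWeq : W = v + β • (x k - x (k - 1)) - α • g := by
          rw [hW, hv]; module
        rw [hWeq]
        simp only [inner_sub_left, inner_add_left, inner_smul_left,
          RCLike.conj_to_real]
        rw [real_inner_self_eq_norm_sq]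
      -- ηt k * ‖g‖² explicitly
      have hEmul : ηt k * ‖g‖ ^ 2 = (f (x k) - fstar)
          + β * ⟪g, x k - x (k - 1)⟫ - (1 - β) / (2 * L) * ‖g‖ ^ 2 := by
        rw [hE]
        field_simp
      have hswap : ⟪g, x k - x (k - 1)⟫ = ⟪x k - x (k - 1), g⟫ :=
        real_inner_comm _ _
      have hvg : ⟪v, g⟫ = ⟪g, v⟫ := real_inner_comm _ _
      have hαval : α * (2 * L) = 2 - β := by
        rw [hα]; field_simp
      have hL2 : (0:ℝ) < 2 * L := by linarith
      have hαc : α - (1 - β) / (2 * L) = 1 / (2 * L) := by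
        rw [hα]; field_simp; ring
      have h4 : 1 / (2 * L) * ‖g‖ ^ 2 ≤ 1 / 2 * ⟪g, v⟫ := by
        rw [div_mul_eq_mul_div, div_le_iff₀ hL2]
        nlinarith [hkey]
      have h5 : (α - (1 - β) / (2 * L)) * ‖g‖ ^ 2 = 1 / (2 * L) * ‖g‖ ^ 2 := by
        rw [hαc]
      have hfin : ηt k * ‖g‖ ^ 2 ≤ ⟪W, g⟫ := by
        rw [hEmul, hWg, hfx, hswap, hvg]
        nlinarith [h4, h5]
      exact mul_le_mul_of_nonneg_left hfin hηt0
  linarith [hsq, hkeyprod]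
end

section
/- Let f be convex, differentiable, L-smooth, with minimizer x*, and consider deterministic MAG with step size η_k = min{(f(x_k) - f*)/(c‖d_k‖²), η_max} where c > 1. Then with Q = min{(2-1/c)η_max, (1-β)(c-1)/(c²L)}, the averaged iterate x̂_K = (1/K)∑_{k=1}^K x_k satisfies f(x̂_K) - f* ≤ ‖x_1 - x*‖²/(QK). -/
open Finset
open scoped RealInnerProductSpace

set_option maxHeartbeats 1600000

/-- `O(1/K)` convergence of deterministic MAG with capped step size
`η k = min ((f (x k) - f*)/(c ‖d k‖²)) η_max` for convex `L`-smooth functions: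
the averaged iterate satisfies `f x̂_K - f* ≤ ‖x 1 - x*‖² / (Q K)` with
`Q = min ((2 - 1/c) η_max) ((1-β)(c-1)/(c² L))`. -/
theorem alr_mag_capped_convex_rate
    {E : Type*} [NormedAddCommGroup E] [InnerProductSpace ℝ E]
    (f : E → ℝ) (g : E → E) (L : ℝ) (hL : 0 < L)
    (hconv : ∀ y z : E, f y + ⟪g y, z - y⟫ ≤ f z)
    (hsmooth : ∀ y z : E, f z ≤ f y + ⟪g y, z - y⟫ + L / 2 * ‖z - y‖ ^ 2)
    (xstar : E) (fstar : ℝ) (hfstar : fstar = f xstar)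
    (hmin : ∀ y : E, f xstar ≤ f y)
    (β c ηmax : ℝ) (hβ : β ∈ Set.Ioo (0 : ℝ) 1) (hc : 1 < c) (hηmax : 0 < ηmax)
    (x d : ℕ → E) (η : ℕ → ℝ)
    (hd0 : d 0 = 0)
    (hd : ∀ k, 1 ≤ k → d k = g (x k) + β • d (k - 1))
    (hdne : ∀ k, 1 ≤ k → d k ≠ 0)
    (hη : ∀ k, 1 ≤ k → η k = min ((f (x k) - fstar) / (c * ‖d k‖ ^ 2)) ηmax)
    (hx : ∀ k, 1 ≤ k → x (k + 1) = x k - η k • d k) :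
    ∀ K : ℕ, 1 ≤ K →
      f (((K : ℝ)⁻¹) • (∑ k ∈ Icc (1 : ℕ) K, x k)) - fstar ≤
        ‖x 1 - xstar‖ ^ 2 /
          (min ((2 - 1 / c) * ηmax) ((1 - β) * (c - 1) / (c ^ 2 * L)) * K) := by
  obtain ⟨hβ0, hβ1⟩ := hβ
  have hc0 : (0:ℝ) < c := lt_trans one_pos hc
  have h1β : (0:ℝ) < 1 - β := by linarith
  obtain ⟨Q, hQdef⟩ : ∃ q : ℝ, q = min ((2 - 1 / c) * ηmax) ((1 - β) * (c - 1) / (c ^ 2 * L)) :=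
    ⟨_, rfl⟩
  have hcu : (0:ℝ) < 1 / c := by positivity
  have hcu1 : 1 / c < 1 := by rw [div_lt_one hc0]; exact hc
  have hQ1 : (0:ℝ) < (2 - 1 / c) * ηmax := by nlinarith
  have hQ2 : (0:ℝ) < (1 - β) * (c - 1) / (c ^ 2 * L) := by
    apply div_pos (by nlinarith) (by positivity)
  have hQpos : 0 < Q := by rw [hQdef]; exact lt_min hQ1 hQ2
  -- basic quantities
  obtain ⟨Δ, hΔdef⟩ : ∃ D : ℕ → ℝ, D = fun k => f (x k) - fstar := ⟨_, rfl⟩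
  have hΔ0 : ∀ k, 0 ≤ Δ k := by
    intro k; simp only [hΔdef]; exact sub_nonneg.2 (hfstar ▸ hmin (x k))
  have hη' : ∀ k, 1 ≤ k → η k = min (Δ k / (c * ‖d k‖ ^ 2)) ηmax := by
    intro k hk; simp only [hΔdef]; exact hη k hk
  obtain ⟨D, hDdef⟩ : ∃ D : ℕ → ℝ, D = fun k => ∑ j ∈ Icc 1 k, β ^ (k - j) * Δ j := ⟨_, rfl⟩
  have hD0 : ∀ k, 0 ≤ D k := by
    intro k
    simp only [hDdef]
    exact Finset.sum_nonneg fun j _ => mul_nonneg (pow_nonneg hβ0.le _) (hΔ0 j)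
  have hDrec : ∀ m : ℕ, D (m + 1) = Δ (m + 1) + β * D m := by
    intro m
    have h1 : D (m + 1) = (∑ j ∈ Icc 1 m, β ^ (m + 1 - j) * Δ j) + β ^ (m + 1 - (m+1)) * Δ (m+1) := by
      simp only [hDdef]
      exact Finset.sum_Icc_succ_top (by omega) _
    have h2 : ∀ j ∈ Icc 1 m, β ^ (m + 1 - j) * Δ j = β * (β ^ (m - j) * Δ j) := by
      intro j hj
      have hjm : j ≤ m := (Finset.mem_Icc.1 hj).2
      have : m + 1 - j = (m - j) + 1 := by omega
      rw [this, pow_succ]; ring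
    rw [h1, Finset.sum_congr rfl h2, ← Finset.mul_sum]
    simp only [hDdef, Nat.sub_self, pow_zero]
    ring
  have hDgeΔ : ∀ m : ℕ, Δ (m + 1) ≤ D (m + 1) := by
    intro m
    have := hDrec m
    nlinarith [hD0 m, hβ0.le]
  -- gradient norm bound
  have hg2 : ∀ y : E, ‖g y‖ ^ 2 ≤ 2 * L * (f y - fstar) := by
    intro y
    have h := hsmooth y (y - L⁻¹ • g y)
    have h1 : ⟪g y, (y - L⁻¹ • g y) - y⟫ = -(L⁻¹ * ‖g y‖ ^ 2) := by
      simp [real_inner_smul_right, real_inner_self_eq_norm_sq]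
    have h2 : ‖(y - L⁻¹ • g y) - y‖ ^ 2 = L⁻¹ ^ 2 * ‖g y‖ ^ 2 := by
      simp [norm_smul, mul_pow, abs_of_pos (inv_pos.2 hL), sq_abs]
    rw [h1, h2] at h
    have h3 : fstar ≤ f (y - L⁻¹ • g y) := hfstar ▸ hmin _
    have e : L / 2 * (L⁻¹ ^ 2 * ‖g y‖ ^ 2) = L⁻¹ / 2 * ‖g y‖ ^ 2 := by
      field_simp
    rw [e] at h
    have key : L⁻¹ * ‖g y‖ ^ 2 ≤ 2 * (f y - fstar) := by linarith
    have := mul_le_mul_of_nonneg_left key hL.le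
    have hLinv : L * L⁻¹ = 1 := mul_inv_cancel₀ hL.ne'
    nlinarith [this, hLinv]
  -- convexity lower bound on ⟪g y, y - x*⟫
  have hgx : ∀ y : E, f y - fstar ≤ ⟪g y, y - xstar⟫ := by
    intro y
    have h := hconv y xstar
    have : ⟪g y, xstar - y⟫ = -⟪g y, y - xstar⟫ := by
      rw [show xstar - y = -(y - xstar) from by abel, inner_neg_right]
    rw [this] at h
    rw [hfstar]; linarith
  -- direction norm bound : ‖d k‖² ≤ (2L/(1-β)) D k
  obtain ⟨s, hsdef⟩ : ∃ s : ℝ, s = 2 * L / (1 - β) := ⟨_, rfl⟩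
  have hs_pos : 0 < s := by rw [hsdef]; positivity
  have hs_eq : (1 - β) * s = 2 * L := by
    rw [hsdef]; field_simp
  have hd2 : ∀ k : ℕ, ‖d k‖ ^ 2 ≤ s * D k := by
    intro k
    induction k with
    | zero => simp [hd0, hDdef]
    | succ m ih =>
      have hdk : d (m + 1) = g (x (m + 1)) + β • d m := by
        have := hd (m + 1) (by omega)
        simpa using this
      have tri : ‖d (m + 1)‖ ≤ ‖g (x (m + 1))‖ + β * ‖d m‖ := by
        rw [hdk]
        calc ‖g (x (m+1)) + β • d m‖ ≤ ‖g (x (m+1))‖ + ‖β • d m‖ := norm_add_le _ _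
          _ = ‖g (x (m+1))‖ + β * ‖d m‖ := by rw [norm_smul, Real.norm_eq_abs, abs_of_pos hβ0]
      set a : ℝ := ‖g (x (m + 1))‖ with hadef
      set b : ℝ := β * ‖d m‖ with hbdef
      have ha : 0 ≤ a := norm_nonneg _
      have hb : 0 ≤ b := mul_nonneg hβ0.le (norm_nonneg _)
      have young : (1 - β) * β * (a + b) ^ 2 ≤ β * a ^ 2 + (1 - β) * b ^ 2 := by
        nlinarith [sq_nonneg (β * a - (1 - β) * b)]
      have hsq : ‖d (m + 1)‖ ^ 2 ≤ (a + b) ^ 2 :=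
        pow_le_pow_left₀ (norm_nonneg _) tri 2
      have hb2 : b ^ 2 = β ^ 2 * ‖d m‖ ^ 2 := by rw [hbdef]; ring
      have s1 : (1 - β) * β * ‖d (m + 1)‖ ^ 2 ≤ (1 - β) * β * (a + b) ^ 2 :=
        mul_le_mul_of_nonneg_left hsq (by positivity)
      -- so (1-β) ‖d (m+1)‖² ≤ a² + (1-β) β ‖d m‖²
      have step : (1 - β) * ‖d (m + 1)‖ ^ 2 ≤ a ^ 2 + (1 - β) * β * ‖d m‖ ^ 2 := by
        have step0 : β * ((1 - β) * ‖d (m + 1)‖ ^ 2) ≤ β * (a ^ 2 + (1 - β) * β * ‖d m‖ ^ 2) := by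
          nlinarith [s1, young, hb2]
        exact le_of_mul_le_mul_left step0 hβ0
      have ha2 : a ^ 2 ≤ 2 * L * Δ (m + 1) := by
        simp only [hΔdef]; exact hg2 (x (m + 1))
      have hdm : (1 - β) * β * ‖d m‖ ^ 2 ≤ β * (2 * L) * D m := by
        have := mul_le_mul_of_nonneg_left ih (mul_nonneg h1β.le hβ0.le)
        calc (1 - β) * β * ‖d m‖ ^ 2 ≤ (1 - β) * β * (s * D m) := this
          _ = β * ((1 - β) * s) * D m := by ring
          _ = β * (2 * L) * D m := by rw [hs_eq]
      have final : (1 - β) * ‖d (m + 1)‖ ^ 2 ≤ (1 - β) * (s * D (m + 1)) := by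
        have : (1 - β) * (s * D (m + 1)) = 2 * L * Δ (m + 1) + β * (2 * L) * D m := by
          rw [hDrec m, show (1 - β) * (s * (Δ (m+1) + β * D m)) = ((1-β)*s) * Δ (m+1) + β * ((1-β)*s) * D m from by ring, hs_eq]
        linarith [step, ha2, hdm]
      exact le_of_mul_le_mul_left final h1β
  -- step size facts
  have hnd2 : ∀ k : ℕ, 1 ≤ k → 0 < ‖d k‖ ^ 2 := fun k hk =>
    pow_pos (norm_pos_iff.2 (hdne k hk)) 2
  have hη_nonneg : ∀ k : ℕ, 1 ≤ k → 0 ≤ η k := by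
    intro k hk
    rw [hη' k hk]
    exact le_min (div_nonneg (hΔ0 k) (by positivity)) hηmax.le
  have hcancel : ∀ k : ℕ, 1 ≤ k → Δ k / (c * ‖d k‖ ^ 2) * ‖d k‖ ^ 2 = Δ k / c := by
    intro k hk
    have hne : ‖d k‖ ^ 2 ≠ 0 := (hnd2 k hk).ne'
    rw [div_mul_eq_mul_div, mul_div_mul_right _ _ hne]
  have hηd2 : ∀ k : ℕ, 1 ≤ k → η k * ‖d k‖ ^ 2 ≤ Δ k / c := by
    intro k hk
    have : η k ≤ Δ k / (c * ‖d k‖ ^ 2) := by rw [hη' k hk]; exact min_le_left _ _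
    calc η k * ‖d k‖ ^ 2 ≤ Δ k / (c * ‖d k‖ ^ 2) * ‖d k‖ ^ 2 :=
          mul_le_mul_of_nonneg_right this (hnd2 k hk).le
      _ = Δ k / c := hcancel k hk
  -- inner product lower bound
  have hp : ∀ k : ℕ, 1 ≤ k → (1 - 1/c) * D k + Δ k / c ≤ ⟪d k, x k - xstar⟫ := by
    intro k hk
    induction k, hk using Nat.le_induction with
    | base =>
      have hd1 : d 1 = g (x 1) := by simpa [hd0] using hd 1 le_rfl
      have hD1 : D 1 = Δ 1 := by simp [hDdef]
      rw [hd1, hD1]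
      have h0 : Δ 1 ≤ ⟪g (x 1), x 1 - xstar⟫ := by
        simp only [hΔdef]; exact hgx (x 1)
      have e : (1 - 1/c) * Δ 1 + Δ 1 / c = Δ 1 := by ring
      rw [e]; exact h0
    | succ k hk ih =>
      have hdk : d (k + 1) = g (x (k + 1)) + β • d k := by
        simpa using hd (k + 1) (by omega)
      have hxk : x (k + 1) = x k - η k • d k := hx k hk
      have expand : ⟪d (k+1), x (k+1) - xstar⟫ =
          ⟪g (x (k+1)), x (k+1) - xstar⟫ + β * ⟪d k, x (k+1) - xstar⟫ := by
        rw [hdk, inner_add_left, real_inner_smul_left]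
      have e2 : ⟪d k, x (k+1) - xstar⟫ = ⟪d k, x k - xstar⟫ - η k * ‖d k‖ ^ 2 := by
        rw [hxk, show x k - η k • d k - xstar = (x k - xstar) - η k • d k from by abel,
          inner_sub_right, real_inner_smul_right, real_inner_self_eq_norm_sq]
      have h1 : Δ (k+1) ≤ ⟪g (x (k+1)), x (k+1) - xstar⟫ := by
        simp only [hΔdef]; exact hgx (x (k+1))
      have h2 : (1 - 1/c) * D k ≤ ⟪d k, x (k+1) - xstar⟫ := by
        rw [e2]; linarith [ih, hηd2 k hk]
      have h2' : β * ((1 - 1/c) * D k) ≤ β * ⟪d k, x (k+1) - xstar⟫ :=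
        mul_le_mul_of_nonneg_left h2 hβ0.le
      rw [expand, hDrec k]
      have e3 : (1 - 1/c) * (Δ (k+1) + β * D k) + Δ (k+1) / c
          = Δ (k+1) + β * ((1 - 1/c) * D k) := by ring
      rw [e3]
      exact add_le_add h1 h2'
  -- per-step descent
  have hV : ∀ k : ℕ, 1 ≤ k →
      ‖x (k+1) - xstar‖ ^ 2 ≤ ‖x k - xstar‖ ^ 2 - Q * Δ k := by
    intro k hk
    have hxk : x (k + 1) = x k - η k • d k := hx k hk
    have expand : ‖x (k+1) - xstar‖ ^ 2
        = ‖x k - xstar‖ ^ 2 - 2 * (η k * ⟪d k, x k - xstar⟫) + (η k)^2 * ‖d k‖ ^ 2 := by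
      rw [hxk, show x k - η k • d k - xstar = (x k - xstar) - η k • d k from by abel,
        norm_sub_sq_real, real_inner_smul_right, norm_smul, Real.norm_eq_abs, mul_pow, sq_abs,
        real_inner_comm]
    have hpk := hp k hk
    have hDk : 0 ≤ D k := hD0 k
    have hΔk := hΔ0 k
    have hnd := hnd2 k hk
    have hηn := hη_nonneg k hk
    have hηd := hηd2 k hk
    obtain ⟨m, rfl⟩ : ∃ m, k = m + 1 := ⟨k - 1, by omega⟩
    have hDge := hDgeΔ m
    rcases le_total ((Δ (m+1)) / (c * ‖d (m+1)‖ ^ 2)) ηmax with hcase | hcase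
    · -- Polyak step active : η k = Δ k / (c ‖d k‖²)
      have hηk : η (m+1) = Δ (m+1) / (c * ‖d (m+1)‖ ^ 2) := by
        rw [hη' (m+1) hk]; exact min_eq_left hcase
      set P : ℝ := Δ (m+1) / (c * ‖d (m+1)‖ ^ 2) with hPdef
      have hPnn : 0 ≤ P := div_nonneg hΔk (by positivity)
      have hPd2 : P * ‖d (m+1)‖ ^ 2 = Δ (m+1) / c := by
        rw [hPdef]; exact hcancel (m+1) hk
      have hη2 : (η (m+1))^2 * ‖d (m+1)‖ ^ 2 = P * (Δ (m+1) / c) := by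
        rw [hηk]; rw [sq, mul_assoc, hPd2]
      -- key : Q₂ Δ ≤ 2 (1 - 1/c) P D
      have hDpos : 0 < D (m+1) := by
        rcases lt_or_eq_of_le (hD0 (m+1)) with h | h
        · exact h
        · exfalso; have := hd2 (m+1); rw [← h] at this; nlinarith
      have hkey : (1 - β) * (c - 1) / (c ^ 2 * L) * Δ (m+1) ≤ 2 * (1 - 1/c) * (P * D (m+1)) := by
        have hPD : P * D (m+1) = Δ (m+1) * D (m+1) / (c * ‖d (m+1)‖ ^ 2) := by
          rw [hPdef]; ring
        rw [hPD, show 2 * (1 - 1/c) * (Δ (m+1) * D (m+1) / (c * ‖d (m+1)‖ ^ 2))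
          = (2 * (1 - 1/c) * (Δ (m+1) * D (m+1))) / (c * ‖d (m+1)‖ ^ 2) from by ring]
        rw [le_div_iff₀ (by positivity)]
        have hnds := hd2 (m+1)
        have hc2L : (0:ℝ) < c ^ 2 * L := by positivity
        have hQ2cs : (1 - β) * (c - 1) / (c ^ 2 * L) * (c * s) = 2 * (1 - 1/c) := by
          rw [hsdef]; field_simp
        have A : (1 - β) * (c - 1) / (c ^ 2 * L) * Δ (m+1) * (c * ‖d (m+1)‖ ^ 2)
            ≤ (1 - β) * (c - 1) / (c ^ 2 * L) * Δ (m+1) * (c * (s * D (m+1))) := by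
          apply mul_le_mul_of_nonneg_left _ (by positivity)
          exact mul_le_mul_of_nonneg_left hnds hc0.le
        have B : (1 - β) * (c - 1) / (c ^ 2 * L) * Δ (m+1) * (c * (s * D (m+1)))
            = 2 * (1 - 1/c) * (Δ (m+1) * D (m+1)) := by
          rw [show (1 - β) * (c - 1) / (c ^ 2 * L) * Δ (m+1) * (c * (s * D (m+1)))
            = ((1 - β) * (c - 1) / (c ^ 2 * L) * (c * s)) * (Δ (m+1) * D (m+1)) from by ring, hQ2cs]
        linarith [A, B.le]
      have hQle : Q ≤ (1 - β) * (c - 1) / (c ^ 2 * L) := by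
        rw [hQdef]; exact min_le_right _ _
      rw [expand, hη2, hηk]
      have hPΔ : 0 ≤ P * (Δ (m+1) / c) := mul_nonneg hPnn (by positivity)
      have hineq : 2 * (P * ⟪d (m+1), x (m+1) - xstar⟫)
          ≥ 2 * (1 - 1/c) * (P * D (m+1)) + 2 * (P * (Δ (m+1) / c)) := by
        have := mul_le_mul_of_nonneg_left hpk hPnn
        nlinarith [this]
      nlinarith [hkey, hineq, hPΔ, mul_le_mul_of_nonneg_right hQle hΔk]
    · -- cap active : η k = ηmax
      have hηk : η (m+1) = ηmax := by
        rw [hη' (m+1) hk]; exact min_eq_right hcase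
      have hη2 : (η (m+1))^2 * ‖d (m+1)‖ ^ 2 ≤ ηmax * (Δ (m+1) / c) := by
        rw [hηk, sq, mul_assoc]
        apply mul_le_mul_of_nonneg_left _ hηmax.le
        calc ηmax * ‖d (m+1)‖ ^ 2 ≤ Δ (m+1) / (c * ‖d (m+1)‖ ^ 2) * ‖d (m+1)‖ ^ 2 :=
              mul_le_mul_of_nonneg_right hcase hnd.le
          _ = Δ (m+1) / c := hcancel (m+1) hk
      have hpk2 : (1 - 1/c) * Δ (m+1) + Δ (m+1) / c ≤ ⟪d (m+1), x (m+1) - xstar⟫ := by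
        have : (1 - 1/c) * Δ (m+1) ≤ (1 - 1/c) * D (m+1) :=
          mul_le_mul_of_nonneg_left hDge (by linarith)
        linarith
      have hQle : Q ≤ (2 - 1/c) * ηmax := by
        rw [hQdef]; exact min_le_left _ _
      rw [hηk] at hη2
      rw [expand, hηk]
      have hpk3 : Δ (m+1) ≤ ⟪d (m+1), x (m+1) - xstar⟫ := by
        calc Δ (m+1) = (1 - 1/c) * Δ (m+1) + Δ (m+1) / c := by ring
          _ ≤ _ := hpk2
      have h5 : ηmax * Δ (m+1) ≤ ηmax * ⟪d (m+1), x (m+1) - xstar⟫ :=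
        mul_le_mul_of_nonneg_left hpk3 hηmax.le
      have hη2' : ηmax ^ 2 * ‖d (m+1)‖ ^ 2 ≤ ηmax * Δ (m+1) * (1/c) :=
        hη2.trans_eq (by ring)
      have h6' : Q * Δ (m+1) ≤ 2 * (ηmax * Δ (m+1)) - ηmax * Δ (m+1) * (1/c) :=
        (mul_le_mul_of_nonneg_right hQle hΔk).trans_eq (by ring)
      linarith [hη2', h5, h6']
  -- telescoping
  have htel : ∀ K : ℕ, Q * (∑ k ∈ Icc 1 K, Δ k) ≤ ‖x 1 - xstar‖ ^ 2 - ‖x (K+1) - xstar‖ ^ 2 := by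
    intro K
    induction K with
    | zero => simp
    | succ n ih =>
      rw [Finset.sum_Icc_succ_top (by omega)]
      have := hV (n+1) (by omega)
      rw [mul_add]
      linarith
  -- Jensen / final
  intro K hK
  have hKpos : (0:ℝ) < (K:ℝ) := by exact_mod_cast Nat.pos_of_ne_zero (by omega)
  set y : E := (K : ℝ)⁻¹ • (∑ k ∈ Icc (1:ℕ) K, x k) with hydef
  have hcard : (Icc (1:ℕ) K).card = K := by simp [Nat.Icc_eq_range', Nat.card_Icc]
  have hsum0 : ∑ k ∈ Icc (1:ℕ) K, (x k - y) = 0 := by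
    rw [Finset.sum_sub_distrib, Finset.sum_const, hcard, hydef]
    rw [← Nat.cast_smul_eq_nsmul ℝ, smul_smul, mul_inv_cancel₀ hKpos.ne', one_smul, sub_self]
  have hjen : (K:ℝ) * (f y - fstar) ≤ ∑ k ∈ Icc (1:ℕ) K, Δ k := by
    have h1 : ∀ k ∈ Icc (1:ℕ) K, f y + ⟪g y, x k - y⟫ ≤ f (x k) := fun k _ => hconv y (x k)
    have h2 := Finset.sum_le_sum h1
    rw [Finset.sum_add_distrib, Finset.sum_const, hcard, ← inner_sum, hsum0, inner_zero_right,
      add_zero] at h2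
    have : ∑ k ∈ Icc (1:ℕ) K, Δ k = (∑ k ∈ Icc (1:ℕ) K, f (x k)) - K * fstar := by
      simp only [hΔdef]
      rw [Finset.sum_sub_distrib, Finset.sum_const, hcard]
      simp [nsmul_eq_mul]
    rw [this]
    have : (K:ℝ) * f y ≤ ∑ k ∈ Icc (1:ℕ) K, f (x k) := by
      simpa [nsmul_eq_mul] using h2
    linarith
  have hQK : (0:ℝ) < Q * K := mul_pos hQpos hKpos
  rw [← hQdef, le_div_iff₀ hQK]
  have hfinal : Q * ((K:ℝ) * (f y - fstar)) ≤ ‖x 1 - xstar‖ ^ 2 := by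
    have := mul_le_mul_of_nonneg_left hjen hQpos.le
    have h3 := htel K
    have := sq_nonneg ‖x (K+1) - xstar‖
    nlinarith [htel K, sq_nonneg (‖x (K+1) - xstar‖)]
  calc (f y - fstar) * (Q * K) = Q * ((K:ℝ) * (f y - fstar)) := by ring
    _ ≤ ‖x 1 - xstar‖ ^ 2 := hfinal
end
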